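/- arXiv:1502.01640 — 8 statements merged into one kernel-verified Lean document; each statement's English description precedes it below -/
import Mathlib

section
/- A simplicial set X is isomorphic to the nerve of a small category if and only if for every n ≥ 2 the Segal map (u_1^*, …, u_n^*) : X_n → X_1 ×_{X_0} X_1 ×_{X_0} ⋯ ×_{X_0} X_1 is a bijection, where u_i : [1] → [n] is the monotone map with u_i(0) = i−1 and u_i(1) = i. -/
/-!
Bijectivity of the Segal maps says that `X` is strict Segal: an `n`-simplex is the same as a
path of `n` composable edges (for `n ≤ 1` this holds in every simplicial set). Nerves are strict
Segal, and the property is invariant under isomorphism.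

Conversely, in a strict Segal `X` the composite of two composable edges is the `d₁`-face of the
unique 2-simplex spanned by them. Degenerate 2-simplices give the unit laws, and the unique
3-simplex spanned by three composable edges has both bracketings as its long edge, which gives
associativity. This defines a category `C` whose objects are the vertices of `X` and whose
morphisms are its edges. The 2-truncations of `X` and `nerve C` are isomorphic, because a map
into a strict Segal 2-truncated simplicial set is determined by what it does on edges. Finally,
strict Segal simplicial sets are 2-coskeletal, so this isomorphism extends to `X ≅ nerve C`.
-/

open CategoryTheory Simplicial

namespace Stmt0

/-- The Segal (spine) map: an `n`-simplex is sent to its tuple of spine edges,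
the `i`-th edge being the image under the map `u_{i+1} : [1] → [n]` sending
`0 ↦ i`, `1 ↦ i+1`. -/
def segalMap (X : SSet.{0}) (n : ℕ) (σ : X _⦋n⦌) : Fin n → X _⦋1⦌ :=
  fun i => X.map (SimplexCategory.mkOfSucc i).op σ

/-- A tuple of `1`-simplices is composable (an element of the iterated fiber
product `X_1 ×_{X_0} ⋯ ×_{X_0} X_1`) if the target vertex of each edge is the
source vertex of the next one. -/
def Composable (X : SSet.{0}) (n : ℕ) (f : Fin n → X _⦋1⦌) : Prop :=
  ∀ i j : Fin n, (i : ℕ) + 1 = (j : ℕ) →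
    X.map (SimplexCategory.const ⦋0⦌ ⦋1⦌ 1).op (f i) =
      X.map (SimplexCategory.const ⦋0⦌ ⦋1⦌ 0).op (f j)

end Stmt0

open SimplexCategory SimplexCategory.Truncated

namespace SSet

universe u

variable {X Y : SSet.{u}}

namespace Path

lemma arrow_injective {n : ℕ} :
    Function.Injective (Path.arrow : X.Path (n + 1) → Fin (n + 1) → X _⦋1⦌) :=
  fun _ _ h ↦ Path.ext' (congrFun h)

lemma δ_zero_arrow_castSucc {n : ℕ} (p : X.Path (n + 1)) (i : Fin n) :
    X.δ 0 (p.arrow i.castSucc) = X.δ 1 (p.arrow i.succ) := by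
  rw [p.arrow_tgt, p.arrow_src, Fin.succ_castSucc]

def ofArrows {n : ℕ} (f : Fin (n + 1) → X _⦋1⦌)
    (hf : ∀ i : Fin n, X.δ 0 (f i.castSucc) = X.δ 1 (f i.succ)) : X.Path (n + 1) where
  vertex := Fin.lastCases (X.δ 0 (f (Fin.last n))) fun i ↦ X.δ 1 (f i)
  arrow := f
  arrow_src i := by
    change X.δ 1 (f i) = Fin.lastCases (motive := fun _ ↦ X _⦋0⦌) _ _ i.castSucc
    rw [Fin.lastCases_castSucc]
  arrow_tgt i := by
    change X.δ 0 (f i) = Fin.lastCases (motive := fun _ ↦ X _⦋0⦌) _ _ i.succ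
    induction i using Fin.lastCases with
    | last => rw [Fin.succ_last, Fin.lastCases_last]
    | cast j => rw [Fin.succ_castSucc, Fin.lastCases_castSucc, hf]

end Path

lemma spine_zero_bijective (X : SSet.{u}) : Function.Bijective (X.spine 0) := by
  have vertex_spine (σ : X _⦋0⦌) : (X.spine 0 σ).vertex 0 = σ := by
    rw [spine_vertex, hom_zero_zero (SimplexCategory.const ⦋0⦌ ⦋0⦌ 0), op_id, Functor.map_id_apply]
  refine ⟨fun σ τ h ↦ ?_, fun p ↦ ⟨p.vertex 0, Path.ext₀ (vertex_spine _)⟩⟩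
  rw [← vertex_spine σ, h, vertex_spine]

lemma spine_one_bijective (X : SSet.{u}) : Function.Bijective (X.spine 1) := by
  have arrow_spine (σ : X _⦋1⦌) : (X.spine 1 σ).arrow 0 = σ := by
    rw [spine_arrow, mkOfSucc_eq_id, op_id, Functor.map_id_apply]
  refine ⟨fun σ τ h ↦ ?_, fun p ↦ ⟨p.arrow 0, Path.ext' fun i ↦ ?_⟩⟩
  · rw [← arrow_spine σ, h, arrow_spine]
  · rw [Fin.fin_one_eq_zero i, arrow_spine]

lemma isStrictSegal_iff_two_le :
    X.IsStrictSegal ↔ ∀ n, 2 ≤ n → Function.Bijective (X.spine n) := by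
  refine ⟨fun h n _ ↦ h.segal n, fun h ↦ ⟨fun n ↦ ?_⟩⟩
  match n with
  | 0 => exact X.spine_zero_bijective
  | 1 => exact X.spine_one_bijective
  | n + 2 => exact h _ (by omega)

lemma spine_app (f : X ⟶ Y) (n : ℕ) (σ : X _⦋n⦌) :
    Y.spine n (f.app _ σ) = (X.spine n σ).map f :=
  Path.ext (funext fun _ ↦ (NatTrans.naturality_apply f _ σ).symm)
    (funext fun _ ↦ (NatTrans.naturality_apply f _ σ).symm)

def StrictSegal.ofIso (e : X ≅ Y) (sy : Y.StrictSegal) : X.StrictSegal where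
  spineToSimplex p := e.inv.app _ (sy.spineToSimplex (p.map e.hom))
  spine_spineToSimplex n := funext fun p ↦ by
    ext <;> simp [spine_app]
  spineToSimplex_spine n := funext fun σ ↦ by
    simp [← spine_app]

lemma spine_two_eq_iff {s : X _⦋2⦌} {p : X.Path 2} :
    X.spine 2 s = p ↔ X.δ 2 s = p.arrow 0 ∧ X.δ 0 s = p.arrow 1 := by
  rw [Path.ext'_iff, Fin.forall_fin_two, spine_arrow, spine_arrow, mkOfSucc_zero_eq_δ,
    mkOfSucc_one_eq_δ]
  rfl

section mkOfLeComp

variable {n : ℕ} (σ : X _⦋n⦌) {i j k : Fin (n + 1)} (hij : i ≤ j) (hjk : j ≤ k)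

@[simp]
lemma δ_two_map_mkOfLeComp :
    X.δ 2 (X.map (mkOfLeComp i j k hij hjk).op σ) = X.map (mkOfLe i j hij).op σ := by
  rw [SimplicialObject.δ_def, ← Functor.map_comp_apply, ← op_comp,
    show δ 2 ≫ mkOfLeComp i j k hij hjk = mkOfLe i j hij from Hom.ext_one_left _ _]

@[simp]
lemma δ_one_map_mkOfLeComp :
    X.δ 1 (X.map (mkOfLeComp i j k hij hjk).op σ) = X.map (mkOfLe i k (hij.trans hjk)).op σ := by
  rw [SimplicialObject.δ_def, ← Functor.map_comp_apply, ← op_comp,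
    show δ 1 ≫ mkOfLeComp i j k hij hjk = mkOfLe i k _ from Hom.ext_one_left _ _]

@[simp]
lemma δ_zero_map_mkOfLeComp :
    X.δ 0 (X.map (mkOfLeComp i j k hij hjk).op σ) = X.map (mkOfLe j k hjk).op σ := by
  rw [SimplicialObject.δ_def, ← Functor.map_comp_apply, ← op_comp,
    show δ 0 ≫ mkOfLeComp i j k hij hjk = mkOfLe j k hjk from Hom.ext_one_left _ _]

end mkOfLeComp

namespace Edge

variable {x₀ x₁ x₂ x₃ : X _⦋0⦌}

def path₂ (e₀₁ : Edge x₀ x₁) (e₁₂ : Edge x₁ x₂) : X.Path 2 where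
  vertex := ![x₀, x₁, x₂]
  arrow := ![e₀₁.edge, e₁₂.edge]
  arrow_src i := by fin_cases i; exacts [e₀₁.src_eq, e₁₂.src_eq]
  arrow_tgt i := by fin_cases i; exacts [e₀₁.tgt_eq, e₁₂.tgt_eq]

def path₃ (e₀₁ : Edge x₀ x₁) (e₁₂ : Edge x₁ x₂) (e₂₃ : Edge x₂ x₃) : X.Path 3 where
  vertex := ![x₀, x₁, x₂, x₃]
  arrow := ![e₀₁.edge, e₁₂.edge, e₂₃.edge]
  arrow_src i := by fin_cases i; exacts [e₀₁.src_eq, e₁₂.src_eq, e₂₃.src_eq]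
  arrow_tgt i := by fin_cases i; exacts [e₀₁.tgt_eq, e₁₂.tgt_eq, e₂₃.tgt_eq]

end Edge

namespace StrictSegal

variable (sx : X.StrictSegal) {x₀ x₁ x₂ x₃ : X _⦋0⦌}

lemma δ_spineToSimplex_path₂ (e₀₁ : Edge x₀ x₁) (e₁₂ : Edge x₁ x₂) :
    X.δ 2 (sx.spineToSimplex (Edge.path₂ e₀₁ e₁₂)) = e₀₁.edge ∧
      X.δ 0 (sx.spineToSimplex (Edge.path₂ e₀₁ e₁₂)) = e₁₂.edge :=
  spine_two_eq_iff.1 (sx.spine_spineToSimplex_apply _)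

lemma spineToSimplex_path₂_eq {e₀₁ : Edge x₀ x₁} {e₁₂ : Edge x₁ x₂} {s : X _⦋2⦌}
    (h₂ : X.δ 2 s = e₀₁.edge) (h₀ : X.δ 0 s = e₁₂.edge) :
    sx.spineToSimplex (Edge.path₂ e₀₁ e₁₂) = s := by
  rw [← sx.spineToSimplex_spine_apply s,
    (spine_two_eq_iff (p := Edge.path₂ e₀₁ e₁₂)).2 ⟨h₂, h₀⟩]

noncomputable def compEdge (e₀₁ : Edge x₀ x₁) (e₁₂ : Edge x₁ x₂) : Edge x₀ x₂ :=
  .mk (X.δ 1 (sx.spineToSimplex (Edge.path₂ e₀₁ e₁₂)))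
    -- endpoints via the simplicial identities `d₁ d₁ = d₁ d₂` and `d₀ d₁ = d₀ d₀`
    ((δ_comp_δ_apply (i := 1) (j := 1) le_rfl _).symm.trans
      ((congrArg (X.δ 1) (sx.δ_spineToSimplex_path₂ e₀₁ e₁₂).1).trans e₀₁.src_eq))
    ((δ_comp_δ_apply (i := 0) (j := 0) le_rfl _).trans
      ((congrArg (X.δ 0) (sx.δ_spineToSimplex_path₂ e₀₁ e₁₂).2).trans e₁₂.tgt_eq))

lemma compEdge_edge {e₀₁ : Edge x₀ x₁} {e₁₂ : Edge x₁ x₂} {s : X _⦋2⦌}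
    (h₂ : X.δ 2 s = e₀₁.edge) (h₀ : X.δ 0 s = e₁₂.edge) :
    (sx.compEdge e₀₁ e₁₂).edge = X.δ 1 s := by
  rw [← sx.spineToSimplex_path₂_eq h₂ h₀]
  rfl

lemma compEdge_eq_of_compStruct {e₀₁ : Edge x₀ x₁} {e₁₂ : Edge x₁ x₂} {e₀₂ : Edge x₀ x₂}
    (h : Edge.CompStruct e₀₁ e₁₂ e₀₂) : sx.compEdge e₀₁ e₁₂ = e₀₂ :=
  Edge.ext ((sx.compEdge_edge h.d₂ h.d₀).trans h.d₁)

lemma compEdge_edge_of_eq_map_mkOfLe {n : ℕ} (σ : X _⦋n⦌) {i j k : Fin (n + 1)} {hij : i ≤ j}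
    {hjk : j ≤ k} {e₀₁ : Edge x₀ x₁} {e₁₂ : Edge x₁ x₂}
    (h₀₁ : e₀₁.edge = X.map (mkOfLe i j hij).op σ) (h₁₂ : e₁₂.edge = X.map (mkOfLe j k hjk).op σ) :
    (sx.compEdge e₀₁ e₁₂).edge = X.map (mkOfLe i k (hij.trans hjk)).op σ := by
  rw [sx.compEdge_edge (s := X.map (mkOfLeComp i j k hij hjk).op σ) (by simp [h₀₁])
    (by simp [h₁₂]), δ_one_map_mkOfLeComp]

lemma compEdge_assoc (e₀₁ : Edge x₀ x₁) (e₁₂ : Edge x₁ x₂) (e₂₃ : Edge x₂ x₃) :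
    sx.compEdge (sx.compEdge e₀₁ e₁₂) e₂₃ = sx.compEdge e₀₁ (sx.compEdge e₁₂ e₂₃) := by
  set σ := sx.spineToSimplex (Edge.path₃ e₀₁ e₁₂ e₂₃)
  have arrow_eq (i : Fin 3) :
      (Edge.path₃ e₀₁ e₁₂ e₂₃).arrow i = X.map (mkOfLe _ _ i.castSucc_le_succ).op σ := by
    rw [← sx.spineToSimplex_arrow i,
      show mkOfLe _ _ i.castSucc_le_succ = mkOfSucc i from Hom.ext_one_left _ _]
  have h₀₁ := arrow_eq 0
  have h₁₂ := arrow_eq 1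
  have h₂₃ := arrow_eq 2
  apply Edge.ext
  rw [sx.compEdge_edge_of_eq_map_mkOfLe σ (sx.compEdge_edge_of_eq_map_mkOfLe σ h₀₁ h₁₂) h₂₃,
    sx.compEdge_edge_of_eq_map_mkOfLe σ h₀₁ (sx.compEdge_edge_of_eq_map_mkOfLe σ h₁₂ h₂₃)]

def EdgeCategory (_ : X.StrictSegal) : Type u := X _⦋0⦌

noncomputable instance : SmallCategory sx.EdgeCategory where
  Hom x y := Edge (X := X) x y
  id x := Edge.id x
  comp := sx.compEdge
  id_comp e := sx.compEdge_eq_of_compStruct (.idComp e)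
  comp_id e := sx.compEdge_eq_of_compStruct (.compId e)
  assoc := sx.compEdge_assoc

noncomputable def fromHomotopyCategory :
    ((truncation 2).obj X).HomotopyCategory ⥤ sx.EdgeCategory :=
  Truncated.HomotopyCategory.lift (fun x ↦ x) (fun e ↦ Edge.ofTruncated e) (fun _ ↦ rfl)
    (fun h ↦ sx.compEdge_eq_of_compStruct (Edge.CompStruct.ofTruncated h))

noncomputable def toNerve₂ :
    (truncation 2).obj X ⟶ (truncation 2).obj (nerve sx.EdgeCategory) :=
  Truncated.HomotopyCategory.homToNerveMk sx.fromHomotopyCategory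

lemma toNerve₂_app_one (s : X _⦋1⦌) :
    sx.toNerve₂.app (Opposite.op ⦋1⦌₂) s =
      ComposableArrows.mk₁ (C := sx.EdgeCategory) (Edge.mk' s) :=
  (Truncated.HomotopyCategory.homToNerveMk_app_one sx.fromHomotopyCategory s).trans
    (congrArg ComposableArrows.mk₁ (Truncated.HomotopyCategory.lift_map_homMk _ _ _
      (fun h ↦ sx.compEdge_eq_of_compStruct (Edge.CompStruct.ofTruncated h)) _))

lemma nerve_δ_one_hom_edge (x : ComposableArrows sx.EdgeCategory 2) (y : X _⦋2⦌)
    (h₂ : ((nerve sx.EdgeCategory).δ 2 x).hom.edge = X.δ 2 y)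
    (h₀ : ((nerve sx.EdgeCategory).δ 0 x).hom.edge = X.δ 0 y) :
    ((nerve sx.EdgeCategory).δ 1 x).hom.edge = X.δ 1 y := by
  change (x.map' 0 2).edge = X.δ 1 y
  rw [x.map'_comp 0 1 2]
  exact sx.compEdge_edge h₂.symm h₀.symm

lemma nerve_σ_zero_hom_edge (x : ComposableArrows sx.EdgeCategory 0) :
    ((nerve sx.EdgeCategory).σ 0 x).hom.edge = X.σ 0 x.left := by
  change (x.map (𝟙 _)).edge = _
  rw [x.map_id]
  rfl

noncomputable def fromNerve₂ :
    (truncation 2).obj (nerve sx.EdgeCategory) ⟶ (truncation 2).obj X :=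
  Truncated.liftOfStrictSegal (fun F ↦ F.left) (fun F ↦ F.hom.edge)
    (fun F ↦ F.hom.src_eq.symm) (fun F ↦ F.hom.tgt_eq.symm) sx.nerve_δ_one_hom_edge
    sx.nerve_σ_zero_hom_edge (sx.truncation 1)

lemma mk₁_eq_mk₁_of_edge_eq {a b a' b' : sx.EdgeCategory} (e : a ⟶ b) (e' : a' ⟶ b')
    (h : Edge.edge (X := X) e = Edge.edge (X := X) e') :
    ComposableArrows.mk₁ e = ComposableArrows.mk₁ e' := by
  obtain rfl : a = a' := by rw [← Edge.src_eq (X := X) e, ← Edge.src_eq (X := X) e', h]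
  obtain rfl : b = b' := by rw [← Edge.tgt_eq (X := X) e, ← Edge.tgt_eq (X := X) e', h]
  rw [Edge.ext h]

noncomputable def truncationIsoNerve :
    (truncation 2).obj X ≅ (truncation 2).obj (nerve sx.EdgeCategory) where
  hom := sx.toNerve₂
  inv := sx.fromNerve₂
  hom_inv_id := by
    have := (sx.truncation 1).isStrictSegal
    exact Truncated.IsStrictSegal.hom_ext fun s ↦
      congrArg (sx.fromNerve₂.app _) (sx.toNerve₂_app_one s)
  inv_hom_id := Truncated.IsStrictSegal.hom_ext fun F ↦
    ((sx.toNerve₂_app_one _).trans (sx.mk₁_eq_mk₁_of_edge_eq _ F.hom rfl)).trans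
      (ComposableArrows.mk₁_hom (C := sx.EdgeCategory) F)

end StrictSegal

noncomputable def isoOfTruncationIso {n : ℕ} [X.IsCoskeletal n] [Y.IsCoskeletal n]
    (e : (truncation n).obj X ≅ (truncation n).obj Y) : X ≅ Y :=
  X.isoCoskOfIsCoskeletal n ≪≫ (Truncated.cosk n).mapIso e ≪≫ (Y.isoCoskOfIsCoskeletal n).symm

noncomputable def StrictSegal.isoNerve (sx : X.StrictSegal) : X ≅ nerve sx.EdgeCategory :=
  have := sx.isCoskeletal
  isoOfTruncationIso sx.truncationIsoNerve

end SSet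

namespace Stmt0

open SSet

variable {X : SSet.{0}}

lemma composable_iff {n : ℕ} (f : Fin (n + 1) → X _⦋1⦌) :
    Composable X (n + 1) f ↔ ∀ i : Fin n, X.δ 0 (f i.castSucc) = X.δ 1 (f i.succ) := by
  simp only [Composable, ← δ_zero_eq_const, ← δ_one_eq_const]
  refine ⟨fun h i ↦ h _ _ rfl, fun h i j hij ↦ ?_⟩
  obtain ⟨k, rfl, rfl⟩ : ∃ k : Fin n, i = k.castSucc ∧ j = k.succ :=
    ⟨⟨i, by omega⟩, rfl, Fin.ext (by simp [← hij])⟩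
  exact h k

lemma spine_bijective_iff (n : ℕ) :
    Function.Bijective (X.spine (n + 1)) ↔ Function.Injective (segalMap X (n + 1)) ∧
      ∀ f, Composable X (n + 1) f → ∃ σ, segalMap X (n + 1) σ = f := by
  have segalMap_eq : segalMap X (n + 1) = Path.arrow ∘ X.spine (n + 1) := rfl
  rw [segalMap_eq, Function.Bijective, Path.arrow_injective.of_comp_iff]
  refine and_congr_right fun _ ↦ ⟨fun h f hf ↦ ?_, fun h p ↦ ?_⟩
  · obtain ⟨σ, hσ⟩ := h (Path.ofArrows f ((composable_iff f).1 hf))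
    exact ⟨σ, congrArg Path.arrow hσ⟩
  · obtain ⟨σ, hσ⟩ := h p.arrow ((composable_iff _).2 p.δ_zero_arrow_castSucc)
    exact ⟨σ, Path.arrow_injective hσ⟩

lemma isStrictSegal_iff_segalMap : X.IsStrictSegal ↔ ∀ n : ℕ, 2 ≤ n →
    Function.Injective (segalMap X n) ∧
      ∀ f : Fin n → X _⦋1⦌, Composable X n f → ∃ σ : X _⦋n⦌, segalMap X n σ = f := by
  rw [isStrictSegal_iff_two_le]
  refine forall₂_congr fun n hn ↦ ?_
  obtain ⟨m, rfl⟩ : ∃ m, n = m + 1 := ⟨n - 1, by omega⟩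
  exact spine_bijective_iff m

/-- a simplicial set is isomorphic to the nerve of a small category
iff for every `n ≥ 2` the Segal map `X_n → X_1 ×_{X_0} ⋯ ×_{X_0} X_1` is a
bijection (i.e. it is injective, and every composable tuple of edges is the
spine of a unique `n`-simplex). -/
theorem iso_nerve_iff_segal_bijective (X : SSet.{0}) :
    (∃ (C : Type) (_ : SmallCategory C), Nonempty (X ≅ nerve C)) ↔
    ∀ n : ℕ, 2 ≤ n →
      Function.Injective (segalMap X n) ∧
      ∀ f : Fin n → X _⦋1⦌, Composable X n f → ∃ σ : X _⦋n⦌, segalMap X n σ = f := by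
  rw [← isStrictSegal_iff_segalMap]
  constructor
  · rintro ⟨C, _, ⟨e⟩⟩
    exact ((Nerve.strictSegal C).ofIso e).isStrictSegal
  · intro _
    exact ⟨_, _, ⟨(StrictSegal.ofIsStrictSegal X).isoNerve⟩⟩

end Stmt0
end

section
/- Fix an injective map f : Fin k → ℝ^m. Let Y be the space of continuous paths γ : [0,1] → (Fin k → ℝ^m) such that γ(0) = f, γ(1) is the constant map 0, and for all s ≤ t in [0,1], the partition of Fin k induced by γ(t) (two indices equivalent iff γ(t) sends them to the same point) refines backwards: if γ(s)(i) = γ(s)(j) then γ(t)(i) = γ(t)(j). Then Y is contractible. An explicit contraction exists: Y deformation retracts to the straight-line path γ₀(t)(j) = t · f(j) via the homotopy h_s(α)(t)(j) = s · α(t/s)(j) for t < s and h_s(α)(t)(j) = t · f(j) for t ≥ s. -/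
/-!
At stage `s` the contraction follows a path up to time `1 - s` and then runs linearly to the
origin, so stage `0` is the path itself and stage `1` the straight line `t ↦ (1 - t) • f`.
Cutting a path short is a monotone reparametrization, and scaling by a factor that vanishes only
at the end leaves every partition before time `1` unchanged, so collisions still persist. The
scaling factor jumps at the corner `s = 0`, `t = 1`; the homotopy is still continuous there
because it is bounded by `1` while the path tends to its endpoint, the origin.
-/

open Function unitInterval Set Filter Topology

lemma Setoid.ker_smul_of_ne_zero {ι R M : Type*} [DivisionRing R] [AddCommGroup M] [Module R M]
    {c : R} (hc : c ≠ 0) (v : ι → M) : Setoid.ker (c • v) = Setoid.ker v := by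
  ext i j
  simp only [Setoid.ker_def, Pi.smul_apply, smul_right_inj hc]

namespace ExitPath

section Collisions

variable {ι E : Type*}

def CollisionsPersist (γ : I → ι → E) : Prop :=
  Monotone fun t => Setoid.ker (γ t)

lemma collisionsPersist_const (v : ι → E) : CollisionsPersist fun _ => v :=
  monotone_const

lemma CollisionsPersist.comp_monotone {γ : I → ι → E} (hγ : CollisionsPersist γ) {u : I → I}
    (hu : Monotone u) : CollisionsPersist (γ ∘ u) :=
  hγ.comp hu

lemma CollisionsPersist.smul [AddCommGroup E] [Module ℝ E] {γ : I → ι → E}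
    (hγ : CollisionsPersist γ) {c : I → ℝ} (hc : IsUpperSet {t | c t = 0}) :
    CollisionsPersist fun t => c t • γ t := by
  intro t t' htt'
  by_cases ht' : c t' = 0
  · intro i j _
    simp [ht']
  · have ht : c t ≠ 0 := fun ht => ht' (hc htt' ht)
    simpa only [Setoid.ker_smul_of_ne_zero ht, Setoid.ker_smul_of_ne_zero ht'] using hγ htt'

end Collisions

/-- At the corner `s = 0`, `t = 1` this is the junk value `0 / 0 = 0`. -/
noncomputable def shortcutCoeff (s t : I) : ℝ := (1 - t) / max (s : ℝ) (1 - t)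

lemma one_sub_coe_pos {t : I} (ht : t ≠ 1) : (0 : ℝ) < 1 - t :=
  sub_pos.2 (coe_lt_one.2 (unitInterval.lt_one_iff_ne_one.2 ht))

lemma norm_shortcutCoeff_le_one (s t : I) : ‖shortcutCoeff s t‖ ≤ 1 := by
  have h1t : (0 : ℝ) ≤ 1 - t := by linarith [t.2.2]
  have hmax : 0 ≤ max (s : ℝ) (1 - t) := h1t.trans (le_max_right _ _)
  rw [shortcutCoeff, Real.norm_of_nonneg (div_nonneg h1t hmax)]
  exact div_le_one_of_le₀ (le_max_right _ _) hmax

lemma shortcutCoeff_eq_zero_iff {s t : I} : shortcutCoeff s t = 0 ↔ t = 1 := by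
  constructor
  · intro h
    by_contra ht
    have h1t := one_sub_coe_pos ht
    exact (div_pos h1t (h1t.trans_le (le_max_right _ _))).ne' h
  · rintro rfl
    simp [shortcutCoeff]

lemma isUpperSet_shortcutCoeff_eq_zero (s : I) : IsUpperSet {t | shortcutCoeff s t = 0} := by
  intro t t' htt' ht
  simp only [mem_ofPred_eq, shortcutCoeff_eq_zero_iff] at ht ⊢
  exact le_antisymm le_one' (ht ▸ htt')

lemma shortcutCoeff_zero_right (s : I) : shortcutCoeff s 0 = 1 := by
  simp [shortcutCoeff, max_eq_right s.2.2]

lemma shortcutCoeff_zero_left {t : I} (ht : t ≠ 1) : shortcutCoeff 0 t = 1 := by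
  have h1t := one_sub_coe_pos ht
  simp [shortcutCoeff, max_eq_right h1t.le, h1t.ne']

lemma shortcutCoeff_one_left (t : I) : shortcutCoeff 1 t = 1 - t := by
  simp [shortcutCoeff, max_eq_left (by linarith [t.2.1] : (1 : ℝ) - t ≤ 1)]

lemma continuousAt_shortcutCoeff {s t : I} (hst : ¬(s = 0 ∧ t = 1)) :
    ContinuousAt (fun p : I × I => shortcutCoeff p.1 p.2) (s, t) := by
  have hmax : max (s : ℝ) (1 - t) ≠ 0 := by
    rcases not_and_or.1 hst with hs | ht
    · exact ((coe_pos.2 (unitInterval.pos_iff_ne_zero.2 hs)).trans_le (le_max_left _ _)).ne'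
    · exact ((one_sub_coe_pos ht).trans_le (le_max_right _ _)).ne'
  exact ContinuousAt.div (by fun_prop) (by fun_prop) hmax

section Shortcut

variable {V : Type*} [NormedAddCommGroup V] [NormedSpace ℝ V]

noncomputable def shortcut (s : I) (γ : C(I, V)) (t : I) : V :=
  shortcutCoeff s t • γ (min t (σ s))

lemma shortcut_zero_right (s : I) (γ : C(I, V)) : shortcut s γ 0 = γ 0 := by
  simp [shortcut, shortcutCoeff_zero_right]

lemma shortcut_one_right (s : I) (γ : C(I, V)) : shortcut s γ 1 = 0 := by
  simp [shortcut, shortcutCoeff_eq_zero_iff]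

lemma shortcut_zero_left {γ : C(I, V)} (hγ : γ 1 = 0) : shortcut 0 γ = γ := by
  funext t
  by_cases ht : t = 1
  · rw [ht, shortcut_one_right, hγ]
  · simp [shortcut, shortcutCoeff_zero_left ht, le_one']

lemma shortcut_one_left (γ : C(I, V)) (t : I) : shortcut 1 γ t = (1 - t : ℝ) • γ 0 := by
  simp [shortcut, shortcutCoeff_one_left]

lemma continuousAt_shortcut {s t : I} {γ : C(I, V)} (hγ : γ 1 = 0) :
    ContinuousAt (fun p : (I × C(I, V)) × I => shortcut p.1.1 p.1.2 p.2) ((s, γ), t) := by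
  have hpath : Continuous fun p : (I × C(I, V)) × I => p.1.2 (min p.2 (σ p.1.1)) := by
    fun_prop
  by_cases hst : s = 0 ∧ t = 1
  · obtain ⟨rfl, rfl⟩ := hst
    have hlim := hpath.tendsto ((0, γ), 1)
    simp only [symm_zero, min_self, hγ] at hlim
    show Tendsto _ _ (𝓝 (shortcut 0 γ 1))
    rw [shortcut_one_right]
    have hbdd : IsBoundedUnder (· ≤ ·) (𝓝 ((0, γ), 1))
        (norm ∘ fun p : (I × C(I, V)) × I => shortcutCoeff p.1.1 p.2) :=
      isBoundedUnder_of ⟨1, fun p => norm_shortcutCoeff_le_one p.1.1 p.2⟩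
    exact hbdd.smul_tendsto_zero hlim
  · have hcoeff : ContinuousAt (fun p : (I × C(I, V)) × I => shortcutCoeff p.1.1 p.2)
        ((s, γ), t) :=
      (continuousAt_shortcutCoeff hst).comp (x := ((s, γ), t))
        (f := fun p : (I × C(I, V)) × I => (p.1.1, p.2)) (by fun_prop)
    exact hcoeff.smul hpath.continuousAt

end Shortcut

variable {ι E : Type*} [NormedAddCommGroup E] [NormedSpace ℝ E]

def exitPaths (f : ι → E) : Set C(I, ι → E) :=
  {γ | γ 0 = f ∧ γ 1 = 0 ∧ CollisionsPersist γ}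

def straightLine (f : ι → E) : C(I, ι → E) :=
  ⟨fun t => (1 - t : ℝ) • f, by fun_prop⟩

lemma straightLine_mem_exitPaths (f : ι → E) : straightLine f ∈ exitPaths f := by
  refine ⟨by simp [straightLine], by simp [straightLine], (collisionsPersist_const f).smul ?_⟩
  simpa only [shortcutCoeff_one_left] using isUpperSet_shortcutCoeff_eq_zero 1

variable [Fintype ι]

lemma CollisionsPersist.shortcut {γ : C(I, ι → E)} (hγ : CollisionsPersist γ) (s : I) :
    CollisionsPersist (shortcut s γ) :=
  (hγ.comp_monotone fun _ _ h => min_le_min_right _ h).smul (isUpperSet_shortcutCoeff_eq_zero s)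

lemma continuous_shortcut_exitPaths (f : ι → E) :
    Continuous fun p : (I × exitPaths f) × I => shortcut p.1.1 p.1.2.1 p.2 := by
  refine continuous_iff_continuousAt.2 fun p => ?_
  exact (continuousAt_shortcut p.1.2.2.2.1).comp (f := fun p : (I × exitPaths f) × I =>
    ((p.1.1, (p.1.2 : C(I, ι → E))), p.2)) (by fun_prop)

noncomputable def shortcutHomotopy (f : ι → E) :
    ContinuousMap.Homotopy (ContinuousMap.id (exitPaths f))
      (ContinuousMap.const _ ⟨straightLine f, straightLine_mem_exitPaths f⟩) where
  toFun p := ⟨ContinuousMap.curry ⟨_, continuous_shortcut_exitPaths f⟩ p,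
    (shortcut_zero_right _ _).trans p.2.2.1,
    shortcut_one_right _ _, p.2.2.2.2.shortcut p.1⟩
  continuous_toFun :=
    (ContinuousMap.curry ⟨_, continuous_shortcut_exitPaths f⟩).continuous.subtype_mk _
  map_zero_left γ := Subtype.ext <| ContinuousMap.ext <| congrFun (shortcut_zero_left γ.2.2.1)
  map_one_left γ := Subtype.ext <| ContinuousMap.ext fun t => by
    simp [shortcut_one_left, γ.2.1, straightLine]

theorem contractibleSpace_exitPaths (f : ι → E) : ContractibleSpace (exitPaths f) :=
  (contractible_iff_id_nullhomotopic _).2 ⟨_, ⟨shortcutHomotopy f⟩⟩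

end ExitPath

theorem exit_paths_to_origin_contractible_general
    (k m : ℕ) (f : Fin k → Fin m → ℝ) :
    ContractibleSpace
      {γ : C(unitInterval, Fin k → Fin m → ℝ) //
        γ 0 = f ∧ γ 1 = 0 ∧
        ∀ s t : unitInterval, s ≤ t →
          ∀ i j : Fin k, γ s i = γ s j → γ t i = γ t j} :=
  ExitPath.contractibleSpace_exitPaths f

/-- For an injective configuration `f : Fin k → ℝ^m`, the space of
(reversed) exit paths from `f` to the constant configuration at the origin — i.e.
continuous paths `γ : [0,1] → (Fin k → ℝ^m)` with `γ 0 = f`, `γ 1 = 0`, and such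
that collisions happening at time `s` persist at any later time `t` — is
contractible. -/
theorem exit_paths_to_origin_contractible
    (k m : ℕ) (f : Fin k → Fin m → ℝ) (hf : Injective f) :
    ContractibleSpace
      {γ : C(unitInterval, Fin k → Fin m → ℝ) //
        γ 0 = f ∧ γ 1 = 0 ∧
        ∀ s t : unitInterval, s ≤ t →
          ∀ i j : Fin k, γ s i = γ s j → γ t i = γ t j} :=
  exit_paths_to_origin_contractible_general k m f
end

section
/- A model structure on a fixed category is uniquely determined by its class of cofibrations together with its class of fibrant objects: if two model structures on the same category have the same cofibrations and the same fibrant objects, then they have the same weak equivalences and fibrations, hence coincide. -/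
open CategoryTheory CategoryTheory.Limits

universe v u

namespace Stmt5

variable {C : Type u} [Category.{v} C]

/-- `f` is a retract of `g` in the arrow category. -/
def IsRetract {X Y X' Y' : C} (f : X ⟶ Y) (g : X' ⟶ Y') : Prop :=
  ∃ (i : X ⟶ X') (r : X' ⟶ X) (j : Y ⟶ Y') (s : Y' ⟶ Y),
    i ≫ r = 𝟙 X ∧ j ≫ s = 𝟙 Y ∧ i ≫ g = f ≫ j ∧ r ≫ f = g ≫ s

/-- A (Quillen) model structure on a category `C`: three classes of morphisms
(weak equivalences, cofibrations, fibrations) satisfying the two-out-of-three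
axiom, closure under retracts, the lifting axioms and the factorization
axioms. -/
structure ModelStructure (C : Type u) [Category.{v} C] where
  W : MorphismProperty C
  Cof : MorphismProperty C
  Fib : MorphismProperty C
  w_of_iso : ∀ {X Y : C} (f : X ⟶ Y), IsIso f → W f
  two_of_three_comp : ∀ {X Y Z : C} (f : X ⟶ Y) (g : Y ⟶ Z), W f → W g → W (f ≫ g)
  two_of_three_left : ∀ {X Y Z : C} (f : X ⟶ Y) (g : Y ⟶ Z), W g → W (f ≫ g) → W f
  two_of_three_right : ∀ {X Y Z : C} (f : X ⟶ Y) (g : Y ⟶ Z), W f → W (f ≫ g) → W g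
  w_retract : ∀ {X Y X' Y' : C} (f : X ⟶ Y) (g : X' ⟶ Y'), IsRetract f g → W g → W f
  cof_retract : ∀ {X Y X' Y' : C} (f : X ⟶ Y) (g : X' ⟶ Y'), IsRetract f g → Cof g → Cof f
  fib_retract : ∀ {X Y X' Y' : C} (f : X ⟶ Y) (g : X' ⟶ Y'), IsRetract f g → Fib g → Fib f
  lift : ∀ {A B X Y : C} (i : A ⟶ B) (p : X ⟶ Y), Cof i → Fib p → (W i ∨ W p) →
    HasLiftingProperty i p
  fact₁ : ∀ {X Y : C} (f : X ⟶ Y), ∃ (Z : C) (i : X ⟶ Z) (p : Z ⟶ Y),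
    Cof i ∧ W i ∧ Fib p ∧ i ≫ p = f
  fact₂ : ∀ {X Y : C} (f : X ⟶ Y), ∃ (Z : C) (i : X ⟶ Z) (p : Z ⟶ Y),
    Cof i ∧ Fib p ∧ W p ∧ i ≫ p = f

/-!
Trivial fibrations are the maps with the right lifting property against cofibrations, so the two
structures share them. The heart of the matter is that a trivial cofibration `j : X ⟶ Z` of the
second structure between fibrant objects is a weak equivalence of the first: a retraction `r` of `j`
factors as a trivial cofibration `a` followed by a trivial fibration `b`, so `j ≫ a` is a section of
a common trivial fibration, and `j` is a retract of `j ≫ a` because `a` has a retraction as well.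
Factorizations and lifting remove the fibrancy assumptions, and two-out-of-three then identifies the
weak equivalences; fibrations are the maps with the right lifting property against trivial
cofibrations.
-/

lemma isRetract_of_retractArrow {X Y X' Y' : C} {f : X ⟶ Y} {g : X' ⟶ Y'}
    (h : RetractArrow f g) : IsRetract f g :=
  ⟨h.i.left, h.r.left, h.i.right, h.r.right, h.retract_left, h.retract_right, h.i_w, h.r_w⟩

namespace ModelStructure

open MorphismProperty

variable (M : ModelStructure C)

abbrev trivialCofibrations : MorphismProperty C := M.Cof ⊓ M.W

abbrev trivialFibrations : MorphismProperty C := M.Fib ⊓ M.W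

def IsFibrant [HasTerminal C] (X : C) : Prop := M.Fib (terminal.from X)

instance : M.W.IsStableUnderRetracts :=
  ⟨fun h hg => M.w_retract _ _ (isRetract_of_retractArrow h) hg⟩

instance : M.Cof.IsStableUnderRetracts :=
  ⟨fun h hg => M.cof_retract _ _ (isRetract_of_retractArrow h) hg⟩

instance : M.Fib.IsStableUnderRetracts :=
  ⟨fun h hg => M.fib_retract _ _ (isRetract_of_retractArrow h) hg⟩

instance : HasFactorization M.trivialCofibrations M.Fib where
  nonempty_mapFactorizationData f := by
    obtain ⟨Z, i, p, hiC, hiW, hp, fac⟩ := M.fact₁ f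
    exact ⟨{ Z, i, p, fac, hi := ⟨hiC, hiW⟩, hp }⟩

instance : HasFactorization M.Cof M.trivialFibrations where
  nonempty_mapFactorizationData f := by
    obtain ⟨Z, i, p, hi, hpF, hpW, fac⟩ := M.fact₂ f
    exact ⟨{ Z, i, p, fac, hi, hp := ⟨hpF, hpW⟩ }⟩

lemma rlp_cof : M.Cof.rlp = M.trivialFibrations :=
  rlp_eq_of_le_rlp_of_hasFactorization_of_isStableUnderRetracts
    fun _ _ p hp _ _ i hi => M.lift i p hi hp.1 (Or.inr hp.2)

lemma rlp_trivialCofibrations : M.trivialCofibrations.rlp = M.Fib :=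
  rlp_eq_of_le_rlp_of_hasFactorization_of_isStableUnderRetracts
    fun _ _ p hp _ _ i hi => M.lift i p hi.1 hp (Or.inl hi.2)

lemma llp_trivialFibrations : M.trivialFibrations.llp = M.Cof :=
  llp_eq_of_le_llp_of_hasFactorization_of_isStableUnderRetracts
    fun _ _ i hi _ _ p hp => M.lift i p hi hp.1 (Or.inr hp.2)

lemma cof_comp {X Y Z : C} {f : X ⟶ Y} {g : Y ⟶ Z} (hf : M.Cof f) (hg : M.Cof g) :
    M.Cof (f ≫ g) := by
  rw [← llp_trivialFibrations] at *
  exact comp_mem _ f g hf hg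

lemma fib_comp {X Y Z : C} {f : X ⟶ Y} {g : Y ⟶ Z} (hf : M.Fib f) (hg : M.Fib g) :
    M.Fib (f ≫ g) := by
  rw [← rlp_trivialCofibrations] at *
  exact comp_mem _ f g hf hg

lemma w_left_of_comp_eq_id {X Y : C} {i : X ⟶ Y} {p : Y ⟶ X} (h : i ≫ p = 𝟙 X) (hp : M.W p) :
    M.W i :=
  M.two_of_three_left i p hp (h ▸ M.w_of_iso _ inferInstance)

lemma w_right_of_comp_eq_id {X Y : C} {i : X ⟶ Y} {p : Y ⟶ X} (h : i ≫ p = 𝟙 X) (hi : M.W i) :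
    M.W p :=
  M.two_of_three_right i p hi (h ▸ M.w_of_iso _ inferInstance)

section Fibrant

variable [HasTerminal C]

lemma isFibrant_of_fib {X Y : C} {p : X ⟶ Y} (hp : M.Fib p) (hY : M.IsFibrant Y) :
    M.IsFibrant X := by
  simpa [IsFibrant] using M.fib_comp hp hY

lemma exists_retraction_of_isFibrant {X Y : C} {j : X ⟶ Y} (hj : M.trivialCofibrations j)
    (hX : M.IsFibrant X) : ∃ r : Y ⟶ X, j ≫ r = 𝟙 X := by
  have := M.lift j _ hj.1 hX (Or.inl hj.2)
  have sq : CommSq (𝟙 X) j (terminal.from X) (terminal.from Y) := ⟨terminal.hom_ext _ _⟩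
  exact ⟨sq.lift, sq.fac_left⟩

lemma w_of_trivialCofibration_of_isFibrant (N₁ N₂ : ModelStructure C)
    (htf : N₂.trivialFibrations ≤ N₁.W) {X Z : C} {j : X ⟶ Z} (hj : N₂.trivialCofibrations j)
    (hX : N₂.IsFibrant X) (hZ : N₂.IsFibrant Z) : N₁.W j := by
  obtain ⟨r, hr⟩ := N₂.exists_retraction_of_isFibrant hj hX
  obtain ⟨H, a, b, haC, haW, hb, rfl⟩ := N₂.fact₁ r
  have hbW : N₂.W b := N₂.two_of_three_right a b haW (N₂.w_right_of_comp_eq_id hr hj.2)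
  obtain ⟨t, ht⟩ := N₂.exists_retraction_of_isFibrant ⟨haC, haW⟩ hZ
  have hja : N₁.W (j ≫ a) := N₁.w_left_of_comp_eq_id (by simpa using hr) (htf _ ⟨hb, hbW⟩)
  exact N₁.w_retract j (j ≫ a) ⟨𝟙 X, 𝟙 X, a, t, by simp, ht, by simp, by simp [ht]⟩ hja

lemma w_of_trivialCofibration_of_isFibrant_target (N₁ N₂ : ModelStructure C)
    (htf : N₂.trivialFibrations ≤ N₁.W) (hfib : ∀ X : C, N₁.IsFibrant X ↔ N₂.IsFibrant X)
    {X Y : C} {j : X ⟶ Y} (hj : N₂.trivialCofibrations j) (hY : N₂.IsFibrant Y) : N₁.W j := by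
  obtain ⟨F, a, b, haC, haW, hb, rfl⟩ := N₁.fact₁ j
  have hF : N₂.IsFibrant F := (hfib F).1 (N₁.isFibrant_of_fib hb ((hfib Y).2 hY))
  obtain ⟨U, γ, δ, hγC, hγW, hδ, rfl⟩ := N₂.fact₁ b
  have hγ : N₁.W γ :=
    w_of_trivialCofibration_of_isFibrant N₁ N₂ htf ⟨hγC, hγW⟩ hF (N₂.isFibrant_of_fib hδ hY)
  have := N₂.lift (a ≫ γ ≫ δ) δ hj.1 hδ (Or.inl hj.2)
  have hretract : RetractArrow (a ≫ γ ≫ δ) (a ≫ γ) :=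
    RetractArrow.ofLeftLiftingProperty (p := δ) (by simp)
  exact N₁.w_retract _ _ (isRetract_of_retractArrow hretract) (N₁.two_of_three_comp a γ haW hγ)

lemma trivialCofibrations_le_w (N₁ N₂ : ModelStructure C)
    (htf : N₂.trivialFibrations ≤ N₁.W) (hfib : ∀ X : C, N₁.IsFibrant X ↔ N₂.IsFibrant X) :
    N₂.trivialCofibrations ≤ N₁.W := by
  intro X Z j hj
  obtain ⟨Z', ζ, p, hζC, hζW, hp, -⟩ := N₂.fact₁ (terminal.from Z)
  have hZ' : N₂.IsFibrant Z' := by rwa [IsFibrant, terminal.hom_ext (terminal.from Z') p]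
  have hζ := w_of_trivialCofibration_of_isFibrant_target N₁ N₂ htf hfib ⟨hζC, hζW⟩ hZ'
  have hjζ := w_of_trivialCofibration_of_isFibrant_target N₁ N₂ htf hfib
    ⟨N₂.cof_comp hj.1 hζC, N₂.two_of_three_comp j ζ hj.2 hζW⟩ hZ'
  exact N₁.two_of_three_left j ζ hζ hjζ

lemma w_le_w_of_trivialFibrations_le (N₁ N₂ : ModelStructure C)
    (htf : N₂.trivialFibrations ≤ N₁.W) (hfib : ∀ X : C, N₁.IsFibrant X ↔ N₂.IsFibrant X) :
    N₂.W ≤ N₁.W := by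
  intro X Y f hf
  obtain ⟨Z, i, p, hiC, hiW, hp, rfl⟩ := N₂.fact₁ f
  exact N₁.two_of_three_comp i p (trivialCofibrations_le_w N₁ N₂ htf hfib _ ⟨hiC, hiW⟩)
    (htf _ ⟨hp, N₂.two_of_three_right i p hiW hf⟩)

end Fibrant

end ModelStructure

/-- a model structure is uniquely determined by its cofibrations
together with its fibrant objects: two model structures on the same category
with the same cofibrations and the same fibrant objects have the same weak
equivalences and the same fibrations, hence coincide. -/
theorem modelStructure_eq_of_cof_eq_of_fibrant_eq
    [HasTerminal C] (M₁ M₂ : ModelStructure C)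
    (hcof : M₁.Cof = M₂.Cof)
    (hfib : ∀ X : C, M₁.Fib (terminal.from X) ↔ M₂.Fib (terminal.from X)) :
    M₁.W = M₂.W ∧ M₁.Fib = M₂.Fib := by
  have htf : M₁.trivialFibrations = M₂.trivialFibrations := by
    rw [← M₁.rlp_cof, ← M₂.rlp_cof, hcof]
  have htf₁ : M₁.trivialFibrations ≤ M₂.W := htf ▸ inf_le_right
  have htf₂ : M₂.trivialFibrations ≤ M₁.W := htf ▸ inf_le_right
  have hW : M₁.W = M₂.W := le_antisymm
    (ModelStructure.w_le_w_of_trivialFibrations_le M₂ M₁ htf₁ fun X => (hfib X).symm)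
    (ModelStructure.w_le_w_of_trivialFibrations_le M₁ M₂ htf₂ hfib)
  refine ⟨hW, ?_⟩
  rw [← M₁.rlp_trivialCofibrations, ← M₂.rlp_trivialCofibrations]
  simp only [ModelStructure.trivialCofibrations, hcof, hW]

end Stmt5
end

section
/- Let X be a regular simplicial set. Let Δ(X) be the category of simplices of X (objects: pairs (k, x) with x ∈ X_k; morphisms (k,x) → (ℓ,y): monotone maps g : [k] → [ℓ] with g^*y = x), and let Δ_nd(X) be the full subcategory on pairs (k,x) with x nondegenerate. Then the inclusion Δ_nd(X) → Δ(X) has a left adjoint ρ, where for an object (k,x) written uniquely (by the Eilenberg–Zilber lemma) as x = g^*y with g : [k] → [ℓ] a monotone surjection and y nondegenerate, ρ(k,x) = (ℓ,y), with unit morphism given by g. -/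
/-!
Write a simplex as `x = g^* y` with `g` epi and `y` nondegenerate (Eilenberg–Zilber; in Mathlib
`S.toNπ` and `S.toN`). Then `y`, with unit `g`, is the reflection of `x` into the nondegenerate
simplices: precomposition with `g` is injective because `g` is epi, and it is surjective because
any `t` with `t^* z = x`, `z` nondegenerate, factors through `g`. For the latter, factor `t = e ≫ i`
as epi followed by mono; regularity makes the face `i^* z` nondegenerate, so `x = e^* (i^* z)` is
a second Eilenberg–Zilber decomposition of `x`, and uniqueness gives `e = g`.
-/

open CategoryTheory Simplicial

namespace Stmt7

/-- An element `(c, x)` of the category of simplices of `X` is degenerate if `x`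
is the image of a lower-dimensional simplex under a surjective (degeneracy)
operator. -/
def IsDeg (X : SSet) (p : X.Elements) : Prop :=
  ∃ (d : SimplexCategory) (_ : d.len < p.1.unop.len) (g : p.1.unop ⟶ d),
    Function.Surjective g.toOrderHom ∧
    ∃ y : X.obj (Opposite.op d), X.map g.op y = p.2

/-- A simplicial set is regular if every face of a nondegenerate simplex is
nondegenerate. -/
def Regular (X : SSet) : Prop :=
  ∀ p : X.Elements, ¬IsDeg X p →
    ∀ (c : SimplexCategory) (g : c ⟶ p.1.unop), Function.Injective g.toOrderHom →
      ¬IsDeg X ⟨Opposite.op c, X.map g.op p.2⟩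

open SimplexCategory Opposite Limits SSet

variable {X : SSet}

lemma not_isDeg_iff (p : X.Elements) : ¬IsDeg X p ↔ p.2 ∈ X.nonDegenerate p.1.unop.len := by
  rw [X.mem_nonDegenerate_iff_notMem_degenerate, X.mem_degenerate_iff, not_iff_not]
  constructor
  · rintro ⟨d, hd, g, hg, y, hy⟩
    exact ⟨d.len, hd, g, SimplexCategory.epi_iff_surjective.2 hg, y, hy⟩
  · rintro ⟨m, hm, g, hg, y, hy⟩
    exact ⟨⦋m⦌, hm, g, SimplexCategory.epi_iff_surjective.1 hg, y, hy⟩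

lemma Regular.map_mem_nonDegenerate (hX : Regular X) {n d : ℕ} {z : X _⦋n⦌}
    (hz : z ∈ X.nonDegenerate n) (i : ⦋d⦌ ⟶ ⦋n⦌) [Mono i] :
    X.map i.op z ∈ X.nonDegenerate d :=
  (not_isDeg_iff _).1 <|
    hX ⟨op ⦋n⦌, z⟩ ((not_isDeg_iff _).2 hz) ⦋d⦌ i (mono_iff_injective.1 inferInstance)

lemma Regular.exists_comp_eq (hX : Regular X) {n m ℓ : ℕ} {x : X _⦋n⦌}
    (g : ⦋n⦌ ⟶ ⦋m⦌) [Epi g] {y : X _⦋m⦌} (hy : y ∈ X.nonDegenerate m) (hgy : X.map g.op y = x)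
    (t : ⦋n⦌ ⟶ ⦋ℓ⦌) {z : X _⦋ℓ⦌} (hz : z ∈ X.nonDegenerate ℓ) (htz : X.map t.op z = x) :
    ∃ w : ⦋m⦌ ⟶ ⦋ℓ⦌, g ≫ w = t ∧ X.map w.op z = y := by
  obtain ⟨d, e, i, _, _, rfl⟩ : ∃ (d : ℕ) (e : ⦋n⦌ ⟶ ⦋d⦌) (i : ⦋d⦌ ⟶ ⦋ℓ⦌),
      Epi e ∧ Mono i ∧ e ≫ i = t :=
    ⟨_, factorThruImage t, image.ι t, inferInstance, inferInstance, image.fac t⟩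
  have hx : x = X.map e.op (X.map i.op z) := by
    rw [← htz, op_comp, Functor.map_comp_apply]
  have hiz := hX.map_mem_nonDegenerate hz i
  obtain rfl : m = d := X.unique_nonDegenerate_dim x g ⟨y, hy⟩ hgy.symm e ⟨_, hiz⟩ hx
  obtain rfl : g = e := X.unique_nonDegenerate_map x g ⟨y, hy⟩ hgy.symm e ⟨_, hiz⟩ hx
  have hyz := X.unique_nonDegenerate_simplex x g ⟨y, hy⟩ hgy.symm g ⟨_, hiz⟩ hx
  exact ⟨i, rfl, congrArg Subtype.val hyz.symm⟩

variable (X) in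
abbrev IsNondeg : ObjectProperty (X.Elements)ᵒᵖ := fun p => ¬IsDeg X p.unop

def elementsOpHomMk {p q : (X.Elements)ᵒᵖ} (f : p.unop.1.unop ⟶ q.unop.1.unop)
    (hf : X.map f.op q.unop.2 = p.unop.2) : p ⟶ q :=
  (CategoryOfElements.homMk q.unop p.unop f.op hf).op

lemma elementsOp_hom_ext {p q : (X.Elements)ᵒᵖ} {φ ψ : p ⟶ q}
    (h : φ.unop.1.unop = ψ.unop.1.unop) : φ = ψ :=
  Quiver.Hom.unop_inj (CategoryOfElements.ext _ _ _ (Quiver.Hom.unop_inj h))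

noncomputable def nondegReflection (p : (X.Elements)ᵒᵖ) : (IsNondeg X).FullSubcategory :=
  ⟨op ⟨op ⦋(S.equivElements.symm p.unop).toN.dim⦌, (S.equivElements.symm p.unop).toN.simplex⟩,
    (not_isDeg_iff _).2 (S.equivElements.symm p.unop).toN.nonDegenerate⟩

noncomputable def toNondegReflection (p : (X.Elements)ᵒᵖ) : p ⟶ (nondegReflection p).obj :=
  elementsOpHomMk (S.equivElements.symm p.unop).toNπ (S.map_toNπ_op_apply _)

instance epi_toNondegReflection (p : (X.Elements)ᵒᵖ) : Epi (toNondegReflection p).unop.1.unop :=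
  inferInstanceAs (Epi (S.equivElements.symm p.unop).toNπ)

lemma bijective_toNondegReflection_comp (hX : Regular X) (p : (X.Elements)ᵒᵖ)
    (N : (IsNondeg X).FullSubcategory) :
    Function.Bijective (toNondegReflection p ≫ · : ((nondegReflection p).obj ⟶ N.obj) → _) := by
  constructor
  · intro w₁ w₂ h
    exact elementsOp_hom_ext <| (cancel_epi _).1 (congrArg (fun φ => φ.unop.1.unop) h)
  · intro t
    obtain ⟨w, hgw, hwz⟩ := hX.exists_comp_eq (S.equivElements.symm p.unop).toNπ
      (S.equivElements.symm p.unop).toN.nonDegenerate (S.map_toNπ_op_apply _)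
      t.unop.1.unop ((not_isDeg_iff _).1 N.2) t.unop.2
    exact ⟨elementsOpHomMk w hwz, elementsOp_hom_ext hgw⟩

noncomputable def nondegReflectionHomEquiv (hX : Regular X) (p : (X.Elements)ᵒᵖ)
    (N : (IsNondeg X).FullSubcategory) :
    (nondegReflection p ⟶ N) ≃ (p ⟶ (IsNondeg X).ι.obj N) :=
  InducedCategory.homEquiv.trans (Equiv.ofBijective _ (bijective_toNondegReflection_comp hX p N))

lemma nondegReflectionHomEquiv_apply (hX : Regular X) {p : (X.Elements)ᵒᵖ}
    {N : (IsNondeg X).FullSubcategory} (w : nondegReflection p ⟶ N) :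
    nondegReflectionHomEquiv hX p N w = toNondegReflection p ≫ w.hom :=
  rfl

lemma nondegReflectionHomEquiv_naturality (hX : Regular X) (p : (X.Elements)ᵒᵖ)
    (N N' : (IsNondeg X).FullSubcategory) (v : N ⟶ N') (w : nondegReflection p ⟶ N) :
    nondegReflectionHomEquiv hX p N' (w ≫ v) =
      nondegReflectionHomEquiv hX p N w ≫ (IsNondeg X).ι.map v := by
  simp only [nondegReflectionHomEquiv_apply, ObjectProperty.FullSubcategory.comp_hom,
    ObjectProperty.ι_map, Category.assoc]

noncomputable def nondegReflector (hX : Regular X) :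
    (X.Elements)ᵒᵖ ⥤ (IsNondeg X).FullSubcategory :=
  Adjunction.leftAdjointOfEquiv _ (nondegReflectionHomEquiv_naturality hX)

noncomputable def nondegReflectorAdjunction (hX : Regular X) :
    nondegReflector hX ⊣ (IsNondeg X).ι :=
  Adjunction.adjunctionOfEquivLeft _ (nondegReflectionHomEquiv_naturality hX)

lemma nondegReflectorAdjunction_unit_app (hX : Regular X) (p : (X.Elements)ᵒᵖ) :
    (nondegReflectorAdjunction hX).unit.app p = toNondegReflection p := by
  rw [nondegReflectorAdjunction, Adjunction.adjunctionOfEquivLeft_unit_app,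
    nondegReflectionHomEquiv_apply]
  exact Category.comp_id _

/-- for a regular simplicial set `X`, the inclusion of the full
subcategory `Δ_nd(X)` of nondegenerate simplices into the category of simplices
`Δ(X) = (X.Elements)ᵒᵖ` admits a left adjoint `ρ`, whose unit at each simplex
`(k, x)` is given by the (surjective) degeneracy operator `g` of the
Eilenberg–Zilber decomposition `x = g^* y` with `y` nondegenerate. -/
theorem nondegenerate_inclusion_has_left_adjoint (X : SSet) (hX : Regular X) :
    ∃ (ρ : (X.Elements)ᵒᵖ ⥤ ObjectProperty.FullSubcategory (fun p : (X.Elements)ᵒᵖ => ¬IsDeg X p.unop))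
      (adj : ρ ⊣ ObjectProperty.ι (fun p : (X.Elements)ᵒᵖ => ¬IsDeg X p.unop)),
      ∀ p : (X.Elements)ᵒᵖ,
        Function.Surjective ((adj.unit.app p).unop.1.unop.toOrderHom) := by
  refine ⟨nondegReflector hX, nondegReflectorAdjunction hX, fun p => ?_⟩
  rw [nondegReflectorAdjunction_unit_app, ← SimplexCategory.epi_iff_surjective]
  exact epi_toNondegReflection p

end Stmt7
end

section
/- Let Λ = (ℓ₁,…,ℓ_m) and let P(Λ) be the poset of nonempty chains S in the product poset [ℓ₁] × ⋯ × [ℓ_m] (ordered by inclusion) such that each coordinate projection S → [ℓ_i] is surjective. Fix a chain S = {s₀ < s₁ < ⋯ < s_k} in the product poset. Then the sub-poset {T ∈ P(Λ) : S ⊆ T} is isomorphic, as a poset, to the product P(s₀) × P(s₁ − s₀) × ⋯ × P(s_k − s_{k−1}) × P(Λ − s_k), where each element s_i is viewed as a vector of natural numbers and differences are taken componentwise. -/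
open Function

/-- For a vector `v` of natural numbers, `PChains v` is the poset (ordered by
inclusion) of nonempty chains in the product poset `[v₁] × ⋯ × [v_m]` all of
whose coordinate projections are surjective. -/
abbrev PChains {m : ℕ} (v : Fin m → ℕ) : Type :=
  {S : Finset (∀ j, Fin (v j + 1)) //
    S.Nonempty ∧ IsChain (· ≤ ·) (S : Set (∀ j, Fin (v j + 1))) ∧
    ∀ (j : Fin m) (c : Fin (v j + 1)), ∃ p ∈ S, p j = c}

/-- The successive difference vectors `s₀, s₁ − s₀, …, s_k − s_{k−1}, Λ − s_k`
attached to a chain `s₀ < ⋯ < s_k` in `[ℓ₁] × ⋯ × [ℓ_m]` (differences taken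
componentwise in ℕ). -/
def seg {m : ℕ} (k : ℕ) (ℓ : Fin m → ℕ) (s : Fin (k + 1) → ∀ j, Fin (ℓ j + 1)) :
    Fin (k + 2) → Fin m → ℕ := fun i j =>
  if _ : (i : ℕ) = 0 then (s 0 j : ℕ)
  else if _ : (i : ℕ) = k + 1 then ℓ j - (s (Fin.last k) j : ℕ)
  else (s ⟨(i : ℕ), by have := i.isLt; omega⟩ j : ℕ) -
    (s ⟨(i : ℕ) - 1, by have := i.isLt; omega⟩ j : ℕ)

namespace ChainsIso

def botP {m} (v : Fin m → ℕ) : ∀ j, Fin (v j + 1) := fun _ => ⟨0, Nat.succ_pos _⟩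
def topP {m} (v : Fin m → ℕ) : ∀ j, Fin (v j + 1) := fun j => ⟨v j, Nat.lt_succ_self _⟩

lemma chain_total {α} [Preorder α] {T : Set α} (h : IsChain (· ≤ ·) T)
    {x y} (hx : x ∈ T) (hy : y ∈ T) : x ≤ y ∨ y ≤ x := by
  rcases eq_or_ne x y with rfl | hne
  · exact Or.inl le_rfl
  · exact h hx hy hne

lemma botP_le {m} {v : Fin m → ℕ} (x : ∀ j, Fin (v j + 1)) : botP v ≤ x :=
  fun j => by simp [botP, Fin.le_def]

lemma le_topP {m} {v : Fin m → ℕ} (x : ∀ j, Fin (v j + 1)) : x ≤ topP v :=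
  fun j => by simp [topP, Fin.le_def, Nat.lt_succ_iff.mp (x j).isLt]

lemma bot_mem {m : ℕ} {v : Fin m → ℕ} (T : PChains v) : botP v ∈ T.1 := by
  obtain ⟨hne, hch, hsurj⟩ := T.2
  obtain ⟨p, hp, hmin⟩ := T.1.exists_minimal hne
  have : p = botP v := by
    funext j
    apply Fin.ext
    obtain ⟨q, hq, hqj⟩ := hsurj j ⟨0, Nat.succ_pos _⟩
    rcases chain_total hch (by simpa using hp) (by simpa using hq) with h | h
    · have h2 := h j; rw [hqj] at h2
      have h3 : (p j : ℕ) ≤ 0 := h2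
      show (p j : ℕ) = 0; omega
    · have : q = p := by
        by_contra hne'
        exact hne' (le_antisymm h (hmin hq h))
      subst this
      rw [hqj]; simp [botP]
  rwa [this] at hp

lemma top_mem {m : ℕ} {v : Fin m → ℕ} (T : PChains v) : topP v ∈ T.1 := by
  obtain ⟨hne, hch, hsurj⟩ := T.2
  obtain ⟨p, hp, hmax⟩ := T.1.exists_maximal hne
  have : p = topP v := by
    funext j
    apply Fin.ext
    obtain ⟨q, hq, hqj⟩ := hsurj j ⟨v j, Nat.lt_succ_self _⟩
    rcases chain_total hch (by simpa using hp) (by simpa using hq) with h | h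
    · have : q = p := by
        by_contra hne'
        exact hne' (le_antisymm (hmax hq h) h)
      subst this
      rw [hqj]; simp [topP]
    · have h2 := h j; rw [hqj] at h2
      have h3 : v j ≤ (p j : ℕ) := h2
      have h4 := Nat.lt_succ_iff.mp (p j).isLt
      simp [topP]; omega
  rwa [this] at hp


variable {m k : ℕ} (ℓ : Fin m → ℕ) (s : Fin (k + 1) → ∀ j, Fin (ℓ j + 1))

def lo (i : Fin (k + 2)) : ∀ j, Fin (ℓ j + 1) :=
  if _ : (i : ℕ) = 0 then botP ℓ
  else s ⟨(i : ℕ) - 1, by have := i.isLt; omega⟩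

def hi (i : Fin (k + 2)) : ∀ j, Fin (ℓ j + 1) :=
  if _ : (i : ℕ) = k + 1 then topP ℓ
  else s ⟨(i : ℕ), by have := i.isLt; omega⟩

lemma seg_eq (i : Fin (k + 2)) (j : Fin m) :
    seg k ℓ s i j = (hi ℓ s i j : ℕ) - (lo ℓ s i j : ℕ) := by
  unfold seg lo hi
  split_ifs with h1 h2 h2
  · omega
  · have e : (0 : Fin (k + 1)) = ⟨(i : ℕ), by have := i.isLt; omega⟩ :=
      Fin.ext (by simp [h1])
    rw [e]; simp [botP]
  · have e : Fin.last k = ⟨(i : ℕ) - 1, by have := i.isLt; omega⟩ :=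
      Fin.ext (by simp [Fin.last]; omega)
    rw [e]; simp [topP]
  · rfl

lemma lo_zero : lo ℓ s 0 = botP ℓ := by simp [lo]

lemma hi_last {i : Fin (k + 2)} (h : (i : ℕ) = k + 1) : hi ℓ s i = topP ℓ := by
  simp [hi, h]

lemma hi_eq_lo {i i' : Fin (k + 2)} (h : (i' : ℕ) = (i : ℕ) + 1) :
    hi ℓ s i = lo ℓ s i' := by
  have hi' := i'.isLt
  unfold hi lo
  rw [dif_neg (by omega), dif_neg (by omega)]
  exact congrArg s (Fin.ext (show ((i : ℕ)) = ((i' : ℕ) - 1) by omega))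

lemma lo_mono (hmono : Monotone s) : Monotone (lo ℓ s) := by
  intro i i' hii
  unfold lo
  have hv : (i : ℕ) ≤ (i' : ℕ) := hii
  split_ifs with h1 h2 h2
  · exact le_refl _
  · intro j; simp [botP, Fin.le_def]
  · omega
  · exact hmono (by simp [Fin.le_def]; omega)

lemma lo_le_hi (hmono : Monotone s) (i : Fin (k + 2)) : lo ℓ s i ≤ hi ℓ s i := by
  unfold lo hi
  split_ifs with h1 h2 h2
  · intro j; simp [botP, Fin.le_def]
  · intro j; simp [botP, Fin.le_def]
  · intro j; simp [topP, Fin.le_def]; exact Nat.lt_succ_iff.mp (s _ j).isLt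
  · exact hmono (by simp [Fin.le_def])

lemma lo_mem (T : PChains ℓ) (hS : Finset.image s Finset.univ ⊆ T.1)
    (hbot : botP ℓ ∈ T.1) (i : Fin (k + 2)) : lo ℓ s i ∈ T.1 := by
  unfold lo
  split_ifs with h1
  · exact hbot
  · exact hS (Finset.mem_image_of_mem s (Finset.mem_univ _))

lemma hi_mem (T : PChains ℓ) (hS : Finset.image s Finset.univ ⊆ T.1)
    (htop : topP ℓ ∈ T.1) (i : Fin (k + 2)) : hi ℓ s i ∈ T.1 := by
  unfold hi
  split_ifs with h1
  · exact htop
  · exact hS (Finset.mem_image_of_mem s (Finset.mem_univ _))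


def phi (i : Fin (k + 2)) (p : ∀ j, Fin (ℓ j + 1)) : ∀ j, Fin (seg k ℓ s i j + 1) :=
  fun j => ⟨min ((p j : ℕ) - (lo ℓ s i j : ℕ)) (seg k ℓ s i j),
    Nat.lt_succ_of_le (min_le_right _ _)⟩

def psi (i : Fin (k + 2)) (u : ∀ j, Fin (seg k ℓ s i j + 1)) : ∀ j, Fin (ℓ j + 1) :=
  fun j => ⟨(lo ℓ s i j : ℕ) + (u j : ℕ), by
    have h1 := Nat.lt_succ_iff.mp (lo ℓ s i j).isLt
    have h2 := Nat.lt_succ_iff.mp (hi ℓ s i j).isLt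
    have h3 := Nat.lt_succ_iff.mp (u j).isLt
    have h4 := seg_eq ℓ s i j
    omega⟩

lemma phi_psi (i : Fin (k + 2)) (u : ∀ j, Fin (seg k ℓ s i j + 1)) :
    phi ℓ s i (psi ℓ s i u) = u := by
  funext j
  apply Fin.ext
  have h3 := Nat.lt_succ_iff.mp (u j).isLt
  show min ((lo ℓ s i j : ℕ) + (u j : ℕ) - (lo ℓ s i j : ℕ)) (seg k ℓ s i j) = (u j : ℕ)
  omega

lemma psi_phi (i : Fin (k + 2)) (p : ∀ j, Fin (ℓ j + 1))
    (h1 : lo ℓ s i ≤ p) (h2 : p ≤ hi ℓ s i) : psi ℓ s i (phi ℓ s i p) = p := by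
  funext j
  apply Fin.ext
  have h1' : (lo ℓ s i j : ℕ) ≤ (p j : ℕ) := h1 j
  have h2' : (p j : ℕ) ≤ (hi ℓ s i j : ℕ) := h2 j
  show (lo ℓ s i j : ℕ) + min ((p j : ℕ) - (lo ℓ s i j : ℕ)) (seg k ℓ s i j) = (p j : ℕ)
  rw [seg_eq]
  omega

lemma psi_bot (hmono : Monotone s) (i : Fin (k + 2)) :
    psi ℓ s i (botP (seg k ℓ s i)) = lo ℓ s i := by
  funext j; apply Fin.ext
  show (lo ℓ s i j : ℕ) + 0 = _
  omega

lemma psi_top (hmono : Monotone s) (i : Fin (k + 2)) :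
    psi ℓ s i (topP (seg k ℓ s i)) = hi ℓ s i := by
  funext j; apply Fin.ext
  have hlh : (lo ℓ s i j : ℕ) ≤ (hi ℓ s i j : ℕ) := lo_le_hi ℓ s hmono i j
  show (lo ℓ s i j : ℕ) + seg k ℓ s i j = (hi ℓ s i j : ℕ)
  rw [seg_eq]
  omega

lemma psi_mono (i : Fin (k + 2)) {u v : ∀ j, Fin (seg k ℓ s i j + 1)} (h : u ≤ v) :
    psi ℓ s i u ≤ psi ℓ s i v := by
  intro j
  have : (u j : ℕ) ≤ (v j : ℕ) := h j
  show (lo ℓ s i j : ℕ) + (u j : ℕ) ≤ (lo ℓ s i j : ℕ) + (v j : ℕ)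
  omega

lemma psi_mem_Icc (hmono : Monotone s) (i : Fin (k + 2)) (u : ∀ j, Fin (seg k ℓ s i j + 1)) :
    lo ℓ s i ≤ psi ℓ s i u ∧ psi ℓ s i u ≤ hi ℓ s i := by
  constructor
  · intro j
    show (lo ℓ s i j : ℕ) ≤ (lo ℓ s i j : ℕ) + (u j : ℕ)
    omega
  · intro j
    have h3 := Nat.lt_succ_iff.mp (u j).isLt
    have h4 := seg_eq ℓ s i j
    have hlh : (lo ℓ s i j : ℕ) ≤ (hi ℓ s i j : ℕ) := lo_le_hi ℓ s hmono i j
    show (lo ℓ s i j : ℕ) + (u j : ℕ) ≤ (hi ℓ s i j : ℕ)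
    omega

lemma phi_mono (i : Fin (k + 2)) {p q : ∀ j, Fin (ℓ j + 1)} (h : p ≤ q) :
    phi ℓ s i p ≤ phi ℓ s i q := by
  intro j
  have : (p j : ℕ) ≤ (q j : ℕ) := h j
  show min ((p j : ℕ) - _) _ ≤ min ((q j : ℕ) - _) _
  omega

lemma psi_inj (i : Fin (k + 2)) : Function.Injective (psi ℓ s i) := by
  intro u v h
  have := congrArg (phi ℓ s i) h
  rwa [phi_psi, phi_psi] at this


lemma hi_le_lo (hmono : Monotone s) {i i' : Fin (k + 2)} (h : i < i') :
    hi ℓ s i ≤ lo ℓ s i' := by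
  have h1 : (i : ℕ) < (i' : ℕ) := h
  have h2 := i'.isLt
  have e : hi ℓ s i = lo ℓ s ⟨(i : ℕ) + 1, by omega⟩ := hi_eq_lo ℓ s rfl
  rw [e]
  apply lo_mono ℓ s hmono
  show (i : ℕ) + 1 ≤ (i' : ℕ)
  omega

lemma phi_lo (i : Fin (k + 2)) : phi ℓ s i (lo ℓ s i) = botP (seg k ℓ s i) := by
  funext j; apply Fin.ext
  show min ((lo ℓ s i j : ℕ) - (lo ℓ s i j : ℕ)) (seg k ℓ s i j) = 0
  omega

lemma phi_hi (hmono : Monotone s) (i : Fin (k + 2)) :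
    phi ℓ s i (hi ℓ s i) = topP (seg k ℓ s i) := by
  funext j; apply Fin.ext
  have hlh : (lo ℓ s i j : ℕ) ≤ (hi ℓ s i j : ℕ) := lo_le_hi ℓ s hmono i j
  have h4 := seg_eq ℓ s i j
  show min ((hi ℓ s i j : ℕ) - (lo ℓ s i j : ℕ)) (seg k ℓ s i j) = seg k ℓ s i j
  omega

open scoped Classical in
noncomputable def F (T : Finset (∀ j, Fin (ℓ j + 1))) (i : Fin (k + 2)) :
    Finset (∀ j, Fin (seg k ℓ s i j + 1)) :=
  (T.filter (fun p => lo ℓ s i ≤ p ∧ p ≤ hi ℓ s i)).image (phi ℓ s i)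

def G (U : ∀ i, Finset (∀ j, Fin (seg k ℓ s i j + 1))) :
    Finset (∀ j, Fin (ℓ j + 1)) :=
  Finset.univ.biUnion fun i => (U i).image (psi ℓ s i)

lemma mem_F {T : Finset (∀ j, Fin (ℓ j + 1))} {i : Fin (k + 2)}
    {x : ∀ j, Fin (seg k ℓ s i j + 1)} :
    x ∈ F ℓ s T i ↔ ∃ p ∈ T, lo ℓ s i ≤ p ∧ p ≤ hi ℓ s i ∧ phi ℓ s i p = x := by
  simp [F, Finset.mem_image, Finset.mem_filter, and_assoc]

lemma mem_G {U : ∀ i, Finset (∀ j, Fin (seg k ℓ s i j + 1))} {p : ∀ j, Fin (ℓ j + 1)} :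
    p ∈ G ℓ s U ↔ ∃ i, ∃ u ∈ U i, psi ℓ s i u = p := by
  simp [G, Finset.mem_biUnion]

lemma cover_val (j : Fin m) (c : ℕ) (hc : c ≤ ℓ j) :
    ∃ i, (lo ℓ s i j : ℕ) ≤ c ∧ c ≤ (hi ℓ s i j : ℕ) := by
  classical
  set A := Finset.univ.filter (fun i : Fin (k + 2) => (lo ℓ s i j : ℕ) ≤ c) with hAdef
  have hA : A.Nonempty := ⟨0, by simp [hAdef, lo_zero, botP]⟩
  set i := A.max' hA with hidef
  have hiA : i ∈ A := A.max'_mem hA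
  have hlo : (lo ℓ s i j : ℕ) ≤ c := by
    have := hiA; rw [hAdef] at this; simpa using this
  refine ⟨i, hlo, ?_⟩
  by_contra hhi
  push_neg at hhi
  have hne : (i : ℕ) ≠ k + 1 := by
    intro h
    have e := hi_last ℓ s h
    have : (hi ℓ s i j : ℕ) = ℓ j := by rw [e]; rfl
    omega
  have hlt := i.isLt
  set i' : Fin (k + 2) := ⟨(i : ℕ) + 1, by omega⟩ with hi'def
  have hlo' : (lo ℓ s i' j : ℕ) = (hi ℓ s i j : ℕ) := by
    rw [(hi_eq_lo ℓ s (i := i) (i' := i') rfl)]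
  have hmem : i' ∈ A := by
    rw [hAdef]; simp only [Finset.mem_filter, Finset.mem_univ, true_and]; omega
  have hle : (i' : ℕ) ≤ (i : ℕ) := A.le_max' i' hmem
  rw [hi'def] at hle
  simp at hle

lemma cover_pt (hmono : Monotone s) (T : PChains ℓ)
    (hS : Finset.image s Finset.univ ⊆ T.1) {p} (hp : p ∈ T.1) :
    ∃ i, lo ℓ s i ≤ p ∧ p ≤ hi ℓ s i := by
  classical
  obtain ⟨hne0, hch, hsurj⟩ := T.2
  set A := Finset.univ.filter (fun i : Fin (k + 2) => lo ℓ s i ≤ p) with hAdef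
  have hA : A.Nonempty := ⟨0, by
    rw [hAdef]; simp only [Finset.mem_filter, Finset.mem_univ, true_and]
    rw [lo_zero]; exact botP_le p⟩
  set i := A.max' hA with hidef
  have hiA : i ∈ A := A.max'_mem hA
  have hlo : lo ℓ s i ≤ p := by
    have := hiA; rw [hAdef] at this; simpa using this
  refine ⟨i, hlo, ?_⟩
  by_contra hhi
  have hhimem : hi ℓ s i ∈ T.1 := hi_mem ℓ s T hS (top_mem T) i
  have hcomp := chain_total hch (Finset.mem_coe.mpr hp) (Finset.mem_coe.mpr hhimem)
  have hge : hi ℓ s i ≤ p := hcomp.resolve_left hhi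
  have hne : (i : ℕ) ≠ k + 1 := by
    intro h
    exact hhi (by rw [hi_last ℓ s h]; exact le_topP p)
  have hlt := i.isLt
  set i' : Fin (k + 2) := ⟨(i : ℕ) + 1, by omega⟩ with hi'def
  have hlo' : lo ℓ s i' = hi ℓ s i := (hi_eq_lo ℓ s (i := i) (i' := i') rfl).symm
  have hmem : i' ∈ A := by
    rw [hAdef]; simp only [Finset.mem_filter, Finset.mem_univ, true_and]
    rw [hlo']; exact hge
  have hle : (i' : ℕ) ≤ (i : ℕ) := A.le_max' i' hmem
  rw [hi'def] at hle
  simp at hle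


lemma F_nonempty (hmono : Monotone s) (T : PChains ℓ)
    (hS : Finset.image s Finset.univ ⊆ T.1) (i : Fin (k + 2)) :
    (F ℓ s T.1 i).Nonempty := by
  refine ⟨phi ℓ s i (lo ℓ s i), ?_⟩
  rw [mem_F]
  exact ⟨lo ℓ s i, lo_mem ℓ s T hS (bot_mem T) i, le_refl _, lo_le_hi ℓ s hmono i, rfl⟩

lemma F_chain (T : PChains ℓ) (i : Fin (k + 2)) :
    IsChain (· ≤ ·) ((F ℓ s T.1 i : Set (∀ j, Fin (seg k ℓ s i j + 1)))) := by
  rintro x hx y hy hne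
  rw [Finset.mem_coe, mem_F] at hx hy
  obtain ⟨p, hp, -, -, rfl⟩ := hx
  obtain ⟨q, hq, -, -, rfl⟩ := hy
  rcases chain_total T.2.2.1 (Finset.mem_coe.mpr hp) (Finset.mem_coe.mpr hq) with h | h
  · exact Or.inl (phi_mono ℓ s i h)
  · exact Or.inr (phi_mono ℓ s i h)

lemma F_surj (hmono : Monotone s) (T : PChains ℓ)
    (hS : Finset.image s Finset.univ ⊆ T.1) (i : Fin (k + 2)) (j : Fin m)
    (c : Fin (seg k ℓ s i j + 1)) : ∃ x ∈ F ℓ s T.1 i, x j = c := by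
  have hc : (c : ℕ) ≤ seg k ℓ s i j := Nat.lt_succ_iff.mp c.isLt
  have hseg := seg_eq ℓ s i j
  have hlo1 := Nat.lt_succ_iff.mp (lo ℓ s i j).isLt
  have hhi1 := Nat.lt_succ_iff.mp (hi ℓ s i j).isLt
  have hlh : (lo ℓ s i j : ℕ) ≤ (hi ℓ s i j : ℕ) := lo_le_hi ℓ s hmono i j
  obtain ⟨q, hq, hqj⟩ := T.2.2.2 j ⟨(lo ℓ s i j : ℕ) + (c : ℕ), by omega⟩
  have hqv : (q j : ℕ) = (lo ℓ s i j : ℕ) + (c : ℕ) := by rw [hqj]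
  have hlomem := lo_mem ℓ s T hS (bot_mem T) i
  have hhimem := hi_mem ℓ s T hS (top_mem T) i
  have hch := T.2.2.1
  rcases chain_total hch (Finset.mem_coe.mpr hq) (Finset.mem_coe.mpr hlomem) with h1 | h1
  · -- q ≤ lo i : c = 0, use lo i
    have : (q j : ℕ) ≤ (lo ℓ s i j : ℕ) := h1 j
    have hc0 : (c : ℕ) = 0 := by omega
    refine ⟨phi ℓ s i (lo ℓ s i), ?_, ?_⟩
    · rw [mem_F]; exact ⟨lo ℓ s i, hlomem, le_refl _, lo_le_hi ℓ s hmono i, rfl⟩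
    · apply Fin.ext
      show min ((lo ℓ s i j : ℕ) - (lo ℓ s i j : ℕ)) (seg k ℓ s i j) = (c : ℕ)
      omega
  · rcases chain_total hch (Finset.mem_coe.mpr hq) (Finset.mem_coe.mpr hhimem) with h2 | h2
    · -- lo ≤ q ≤ hi : use q
      refine ⟨phi ℓ s i q, ?_, ?_⟩
      · rw [mem_F]; exact ⟨q, hq, h1, h2, rfl⟩
      · apply Fin.ext
        show min ((q j : ℕ) - (lo ℓ s i j : ℕ)) (seg k ℓ s i j) = (c : ℕ)
        omega
    · -- hi ≤ q : c = seg, use hi i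
      have : (hi ℓ s i j : ℕ) ≤ (q j : ℕ) := h2 j
      refine ⟨phi ℓ s i (hi ℓ s i), ?_, ?_⟩
      · rw [mem_F]; exact ⟨hi ℓ s i, hhimem, lo_le_hi ℓ s hmono i, le_refl _, rfl⟩
      · apply Fin.ext
        show min ((hi ℓ s i j : ℕ) - (lo ℓ s i j : ℕ)) (seg k ℓ s i j) = (c : ℕ)
        omega

lemma G_nonempty (U : ∀ i, PChains (seg k ℓ s i)) :
    (G ℓ s (fun i => (U i).1)).Nonempty := by
  obtain ⟨u, hu⟩ := (U 0).2.1
  exact ⟨psi ℓ s 0 u, mem_G ℓ s |>.mpr ⟨0, u, hu, rfl⟩⟩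

lemma G_chain (hmono : Monotone s) (U : ∀ i, PChains (seg k ℓ s i)) :
    IsChain (· ≤ ·) ((G ℓ s (fun i => (U i).1) : Set (∀ j, Fin (ℓ j + 1)))) := by
  rintro x hx y hy hne
  rw [Finset.mem_coe, mem_G] at hx hy
  obtain ⟨i, u, hu, rfl⟩ := hx
  obtain ⟨i', v, hv, rfl⟩ := hy
  rcases lt_trichotomy i i' with h | h | h
  · exact Or.inl (le_trans (psi_mem_Icc ℓ s hmono i u).2
      (le_trans (hi_le_lo ℓ s hmono h) (psi_mem_Icc ℓ s hmono i' v).1))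
  · subst h
    rcases chain_total (U i).2.2.1 (Finset.mem_coe.mpr hu) (Finset.mem_coe.mpr hv) with hc | hc
    · exact Or.inl (psi_mono ℓ s i hc)
    · exact Or.inr (psi_mono ℓ s i hc)
  · exact Or.inr (le_trans (psi_mem_Icc ℓ s hmono i' v).2
      (le_trans (hi_le_lo ℓ s hmono h) (psi_mem_Icc ℓ s hmono i u).1))

lemma G_surj (U : ∀ i, PChains (seg k ℓ s i)) (j : Fin m) (c : Fin (ℓ j + 1)) :
    ∃ p ∈ G ℓ s (fun i => (U i).1), p j = c := by
  obtain ⟨i, hlo, hhi⟩ := cover_val ℓ s j (c : ℕ) (Nat.lt_succ_iff.mp c.isLt)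
  have hseg := seg_eq ℓ s i j
  obtain ⟨u, hu, huj⟩ := (U i).2.2.2 j ⟨(c : ℕ) - (lo ℓ s i j : ℕ), by omega⟩
  refine ⟨psi ℓ s i u, mem_G ℓ s |>.mpr ⟨i, u, hu, rfl⟩, ?_⟩
  apply Fin.ext
  have huv : (u j : ℕ) = (c : ℕ) - (lo ℓ s i j : ℕ) := by rw [huj]
  show (lo ℓ s i j : ℕ) + (u j : ℕ) = (c : ℕ)
  omega

lemma G_contains (hmono : Monotone s) (U : ∀ i, PChains (seg k ℓ s i)) :
    Finset.image s Finset.univ ⊆ G ℓ s (fun i => (U i).1) := by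
  intro x hx
  rw [Finset.mem_image] at hx
  obtain ⟨t, -, rfl⟩ := hx
  have ht := t.isLt
  set i : Fin (k + 2) := ⟨(t : ℕ), by omega⟩ with hidef
  have hne : (i : ℕ) ≠ k + 1 := by simp [hidef]; omega
  have hhi : hi ℓ s i = s t := by
    unfold hi
    rw [dif_neg hne]
  rw [mem_G]
  refine ⟨i, topP _, top_mem (U i), ?_⟩
  rw [psi_top ℓ s hmono i, hhi]

lemma GF (hmono : Monotone s) (T : PChains ℓ)
    (hS : Finset.image s Finset.univ ⊆ T.1) :
    G ℓ s (fun i => F ℓ s T.1 i) = T.1 := by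
  apply Finset.Subset.antisymm
  · intro p hp
    rw [mem_G] at hp
    obtain ⟨i, u, hu, rfl⟩ := hp
    rw [mem_F] at hu
    obtain ⟨q, hq, h1, h2, rfl⟩ := hu
    rwa [psi_phi ℓ s i q h1 h2]
  · intro p hp
    obtain ⟨i, h1, h2⟩ := cover_pt ℓ s hmono T hS hp
    rw [mem_G]
    refine ⟨i, phi ℓ s i p, ?_, psi_phi ℓ s i p h1 h2⟩
    rw [mem_F]
    exact ⟨p, hp, h1, h2, rfl⟩

lemma FG (hmono : Monotone s) (U : ∀ i, PChains (seg k ℓ s i)) (i : Fin (k + 2)) :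
    F ℓ s (G ℓ s (fun i => (U i).1)) i = (U i).1 := by
  apply Finset.Subset.antisymm
  · intro x hx
    rw [mem_F] at hx
    obtain ⟨p, hp, h1, h2, rfl⟩ := hx
    rw [mem_G] at hp
    obtain ⟨i', u, hu, rfl⟩ := hp
    rcases lt_trichotomy i' i with h | h | h
    · have e : psi ℓ s i' u = lo ℓ s i :=
        le_antisymm (le_trans (psi_mem_Icc ℓ s hmono i' u).2 (hi_le_lo ℓ s hmono h)) h1
      rw [e, phi_lo]
      exact bot_mem (U i)
    · subst h
      rw [phi_psi]
      exact hu
    · have e : psi ℓ s i' u = hi ℓ s i :=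
        le_antisymm h2 (le_trans (hi_le_lo ℓ s hmono h) (psi_mem_Icc ℓ s hmono i' u).1)
      rw [e, phi_hi ℓ s hmono]
      exact top_mem (U i)
  · intro u hu
    rw [mem_F]
    refine ⟨psi ℓ s i u, ?_, (psi_mem_Icc ℓ s hmono i u).1, (psi_mem_Icc ℓ s hmono i u).2,
      phi_psi ℓ s i u⟩
    rw [mem_G]
    exact ⟨i, u, hu, rfl⟩

lemma F_mono {T T' : Finset (∀ j, Fin (ℓ j + 1))} (h : T ⊆ T') (i : Fin (k + 2)) :
    F ℓ s T i ⊆ F ℓ s T' i := by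
  intro x hx
  rw [mem_F] at hx ⊢
  obtain ⟨p, hp, h1, h2, rfl⟩ := hx
  exact ⟨p, h hp, h1, h2, rfl⟩

lemma G_mono {U U' : ∀ i, Finset (∀ j, Fin (seg k ℓ s i j + 1))}
    (h : ∀ i, U i ⊆ U' i) : G ℓ s U ⊆ G ℓ s U' := by
  intro p hp
  rw [mem_G] at hp ⊢
  obtain ⟨i, u, hu, rfl⟩ := hp
  exact ⟨i, u, h i hu, rfl⟩

end ChainsIso

/-- for a fixed chain `S = {s₀ < ⋯ < s_k}` in the product poset
`[ℓ₁] × ⋯ × [ℓ_m]`, the sub-poset `{T ∈ P(Λ) : S ⊆ T}` of the poset `P(Λ)` of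
nonempty chains with surjective coordinate projections is isomorphic, as a
poset, to the product `P(s₀) × P(s₁−s₀) × ⋯ × P(s_k−s_{k−1}) × P(Λ−s_k)`. -/
theorem chains_containing_iso_product
    (m k : ℕ) (ℓ : Fin m → ℕ) (s : Fin (k + 1) → ∀ j, Fin (ℓ j + 1))
    (hs : StrictMono s) :
    Nonempty
      ({T : PChains ℓ // Finset.image s Finset.univ ⊆ T.1} ≃o
        (∀ i : Fin (k + 2), PChains (seg k ℓ s i))) := by
  have hmono := hs.monotone
  refine ⟨{
    toFun := fun T => fun i =>
      ⟨ChainsIso.F ℓ s T.1.1 i,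
        ChainsIso.F_nonempty ℓ s hmono T.1 T.2 i,
        ChainsIso.F_chain ℓ s T.1 i,
        ChainsIso.F_surj ℓ s hmono T.1 T.2 i⟩,
    invFun := fun U =>
      ⟨⟨ChainsIso.G ℓ s (fun i => (U i).1),
        ChainsIso.G_nonempty ℓ s U,
        ChainsIso.G_chain ℓ s hmono U,
        ChainsIso.G_surj ℓ s U⟩,
        ChainsIso.G_contains ℓ s hmono U⟩,
    left_inv := fun T => by
      apply Subtype.ext; apply Subtype.ext
      exact ChainsIso.GF ℓ s hmono T.1 T.2,
    right_inv := fun U => by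
      funext i
      apply Subtype.ext
      exact ChainsIso.FG ℓ s hmono U i,
    map_rel_iff' := by
      intro T T'
      constructor
      · intro h
        have h2 : ChainsIso.G ℓ s (fun i => ChainsIso.F ℓ s T.1.1 i) ⊆
            ChainsIso.G ℓ s (fun i => ChainsIso.F ℓ s T'.1.1 i) :=
          ChainsIso.G_mono ℓ s (fun i => h i)
        rw [ChainsIso.GF ℓ s hmono T.1 T.2, ChainsIso.GF ℓ s hmono T'.1 T'.2] at h2
        exact h2
      · intro h i
        exact ChainsIso.F_mono ℓ s h i }⟩
end

section
/- In the category Fin_o, a non-identity morphism f : ([k],a,c) → ([ℓ],a',c') is sent to an identity morphism by the functor δ : Fin_o → Fin_* if and only if c = white, c' = black, ℓ = k − 1, a = k, f(x) = x for all x < k, and f(k) = a' = b for some b ∈ [k−1]. In particular, no non-identity black-to-black or white-to-white morphism of Fin_o is sent to an identity by δ. -/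
open CategoryTheory Simplicial

namespace ConfigCat

/-- Based maps `[k] → [l]` between the pointed sets `[k] = {0,…,k}` with
basepoint `0`. -/
@[ext]
structure FinStarHom (k l : ℕ) where
  toFun : Fin (k + 1) → Fin (l + 1)
  map_zero : toFun 0 = 0

/-- The objects of the category `Fin_*`: `k` stands for the pointed set
`[k] = {0,…,k}` with basepoint `0`. -/
def FinStar : Type := ℕ

/-- A natural number, regarded as an object of `Fin_*`. -/
def FinStar.mk (n : ℕ) : FinStar := n

/-- The underlying natural number of an object of `Fin_*`. -/
def FinStar.toNat (k : FinStar) : ℕ := k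

/-- The category `Fin_*` of pointed sets `[k]` and based maps. -/
instance : Category FinStar where
  Hom k l := FinStarHom k.toNat l.toNat
  id k := ⟨id, rfl⟩
  comp f g := ⟨g.toFun ∘ f.toFun, by simp [f.map_zero, g.map_zero]⟩
  id_comp f := by apply FinStarHom.ext; rfl
  comp_id f := by apply FinStarHom.ext; rfl
  assoc f g h := by apply FinStarHom.ext; rfl

/-- An object of `Fin_o`: a pointed set `[k]` with a distinguished non-basepoint
element `a` and a color (white or black), where white is only allowed when
`a = k`. -/
structure FinOObj where
  k : ℕ
  a : Fin (k + 1)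
  white : Bool
  a_ne_zero : a ≠ 0
  white_top : white = true → (a : ℕ) = k

/-- A morphism of `Fin_o`: a based map preserving the distinguished elements;
if the target is white then so is the source and the distinguished element of
the target has exactly one preimage, namely the distinguished element of the
source. -/
@[ext]
structure FinOHom (X Y : FinOObj) where
  f : FinStarHom X.k Y.k
  map_a : f.toFun X.a = Y.a
  white_cond : Y.white = true →
    X.white = true ∧ ∀ x, f.toFun x = Y.a → x = X.a

/-- The category `Fin_o`. -/
instance : Category FinOObj where
  Hom X Y := FinOHom X Y
  id X := ⟨⟨id, rfl⟩, rfl, fun h => ⟨h, fun _ hx => hx⟩⟩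
  comp {X Y Z} φ ψ :=
    { f := ⟨ψ.f.toFun ∘ φ.f.toFun, by
        simp [φ.f.map_zero, ψ.f.map_zero]⟩
      map_a := by
        show ψ.f.toFun (φ.f.toFun X.a) = Z.a
        rw [φ.map_a, ψ.map_a]
      white_cond := fun hZ => by
        obtain ⟨hY, hψ⟩ := ψ.white_cond hZ
        obtain ⟨hX, hφ⟩ := φ.white_cond hY
        exact ⟨hX, fun x hx => hφ x (hψ _ hx)⟩ }
  id_comp φ := by apply FinOHom.ext; apply FinStarHom.ext; rfl
  comp_id φ := by apply FinOHom.ext; apply FinStarHom.ext; rfl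
  assoc := by intros; apply FinOHom.ext; apply FinStarHom.ext; rfl
/-- The object part of the deletion functor `δ : Fin_o → Fin_*`: a black object
`([k],a)` goes to `[k]`, a white object `([k],k)` goes to `[k−1]`. -/
def deltaObj (X : FinOObj) : FinStar :=
  FinStar.mk (if X.white then X.k - 1 else X.k)

lemma deltaObj_le (X : FinOObj) : FinStar.toNat (deltaObj X) ≤ X.k := by
  show (if X.white then X.k - 1 else X.k) ≤ X.k
  split <;> omega

/-- The morphism part of the deletion functor `δ : Fin_o → Fin_*` (restriction;
white objects lose their distinguished top point). -/
def deltaMap {X Y : FinOObj} (φ : X ⟶ Y) :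
    FinStarHom (FinStar.toNat (deltaObj X)) (FinStar.toNat (deltaObj Y)) where
  toFun x :=
    ⟨min ((φ.f.toFun (Fin.castLE (Nat.succ_le_succ (deltaObj_le X)) x)) : ℕ)
        (FinStar.toNat (deltaObj Y)),
      Nat.lt_succ_of_le (min_le_right _ _)⟩
  map_zero := by
    apply Fin.ext
    have h0 : Fin.castLE (Nat.succ_le_succ (deltaObj_le X)) (0 : Fin _) =
        (0 : Fin (X.k + 1)) := by
      apply Fin.ext; simp
    show min ((φ.f.toFun _ : ℕ)) _ = _
    rw [h0, φ.f.map_zero]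
    simp

lemma deltaMap_no_trunc {X Y : FinOObj} (φ : X ⟶ Y)
    (x : Fin (FinStar.toNat (deltaObj X) + 1)) :
    ((φ.f.toFun (Fin.castLE (Nat.succ_le_succ (deltaObj_le X)) x)) : ℕ) ≤
      FinStar.toNat (deltaObj Y) := by
  by_cases hY : Y.white = true
  · obtain ⟨hX, huniq⟩ := φ.white_cond hY
    have hYa : (Y.a : ℕ) = Y.k := Y.white_top hY
    have hXa : (X.a : ℕ) = X.k := X.white_top hX
    have hk : 1 ≤ X.k := by
      rcases Nat.eq_zero_or_pos X.k with h0 | h1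
      · exfalso
        apply X.a_ne_zero
        apply Fin.ext
        have := X.a.isLt
        simp only [Fin.val_zero]
        omega
      · exact h1
    have hdX : FinStar.toNat (deltaObj X) = X.k - 1 := by
      show (if X.white then X.k - 1 else X.k) = X.k - 1
      rw [if_pos hX]
    have hne : φ.f.toFun (Fin.castLE (Nat.succ_le_succ (deltaObj_le X)) x) ≠ Y.a := by
      intro he
      have h3 := congrArg Fin.val (huniq _ he)
      rw [Fin.coe_castLE, hXa] at h3
      have hx : (x : ℕ) < FinStar.toNat (deltaObj X) + 1 := x.isLt
      omega
    have hlt := (φ.f.toFun (Fin.castLE (Nat.succ_le_succ (deltaObj_le X)) x)).isLt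
    have hne' : ((φ.f.toFun (Fin.castLE (Nat.succ_le_succ (deltaObj_le X)) x)) : ℕ) ≠ Y.k := by
      intro h4
      apply hne
      apply Fin.ext
      rw [h4, hYa]
    have hdY : FinStar.toNat (deltaObj Y) = Y.k - 1 := by
      show (if Y.white then Y.k - 1 else Y.k) = Y.k - 1
      rw [if_pos hY]
    omega
  · have hdY : FinStar.toNat (deltaObj Y) = Y.k := by
      show (if Y.white then Y.k - 1 else Y.k) = Y.k
      rw [if_neg hY]
    have hlt := (φ.f.toFun (Fin.castLE (Nat.succ_le_succ (deltaObj_le X)) x)).isLt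
    omega

/-- The deletion functor `δ : Fin_o → Fin_*`. -/
def delta : FinOObj ⥤ FinStar where
  obj := deltaObj
  map := deltaMap
  map_id X := by
    apply FinStarHom.ext
    funext x
    apply Fin.ext
    have hx : (x : ℕ) < FinStar.toNat (deltaObj X) + 1 := x.isLt
    show min ((Fin.castLE (Nat.succ_le_succ (deltaObj_le X)) x : Fin (X.k + 1)) : ℕ)
        (FinStar.toNat (deltaObj X)) = (x : ℕ)
    rw [Fin.coe_castLE]
    omega
  map_comp {X Y Z} φ ψ := by
    apply FinStarHom.ext
    funext x
    apply Fin.ext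
    have hA : Fin.castLE (Nat.succ_le_succ (deltaObj_le Y)) ((deltaMap φ).toFun x) =
        φ.f.toFun (Fin.castLE (Nat.succ_le_succ (deltaObj_le X)) x) := by
      apply Fin.ext
      rw [Fin.coe_castLE]
      exact min_eq_left (deltaMap_no_trunc φ x)
    show min ((ψ.f.toFun (φ.f.toFun (Fin.castLE (Nat.succ_le_succ (deltaObj_le X)) x))) : ℕ)
        (FinStar.toNat (deltaObj Z)) =
      min ((ψ.f.toFun (Fin.castLE (Nat.succ_le_succ (deltaObj_le Y)) ((deltaMap φ).toFun x))) : ℕ)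
        (FinStar.toNat (deltaObj Z))
    rw [hA]
end ConfigCat

/-- A simplex `x ∈ X_n` of a simplicial set is degenerate if it is the image of
a lower-dimensional simplex under a surjective (degeneracy) operator. -/
def IsDegenerate (X : SSet) {n : ℕ} (x : X _⦋n⦌) : Prop :=
  ∃ (m : ℕ) (_ : m < n) (g : (⦋n⦌ : SimplexCategory) ⟶ ⦋m⦌),
    Function.Surjective g.toOrderHom ∧ ∃ y : X _⦋m⦌, X.map g.op y = x

namespace ConfigCat

open CategoryTheory

lemma FinStar.hom_eq_eqToHom_iff {m m' : FinStar} (h : m = m') (f : m ⟶ m') :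
    f = eqToHom h ↔ ∀ x : Fin (FinStar.toNat m + 1), (f.toFun x : ℕ) = x := by
  subst h
  refine ⟨fun hf x => by rw [hf]; rfl, fun hf => ?_⟩
  exact FinStarHom.ext (funext fun x => Fin.ext (hf x))

lemma FinOObj.one_le_k (X : FinOObj) : 1 ≤ X.k := by
  have ha : (X.a : ℕ) ≠ 0 := fun h => X.a_ne_zero (Fin.ext h)
  have := X.a.isLt
  omega

lemma FinOHom.exists_eq_eqToHom {X Y : FinOObj} (φ : X ⟶ Y) (hk : X.k = Y.k)
    (hw : X.white = Y.white) (hφ : ∀ x, (φ.f.toFun x : ℕ) = x) :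
    ∃ h : X = Y, φ = eqToHom h := by
  have ha : X.a.val = Y.a.val := (hφ X.a).symm.trans (congrArg Fin.val φ.map_a)
  cases X; cases Y
  obtain rfl : _ = _ := hk
  obtain rfl : _ = _ := hw
  obtain rfl : _ = _ := Fin.ext ha
  exact ⟨rfl, FinOHom.ext (FinStarHom.ext (funext fun x => Fin.ext (hφ x)))⟩

lemma deltaObj_toNat (X : FinOObj) :
    FinStar.toNat (deltaObj X) = if X.white then X.k - 1 else X.k := rfl

lemma delta_map_val {X Y : FinOObj} (φ : X ⟶ Y) (x : Fin (FinStar.toNat (delta.obj X) + 1)) :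
    ((delta.map φ).toFun x : ℕ) = φ.f.toFun (Fin.castLE (Nat.succ_le_succ (deltaObj_le X)) x) :=
  min_eq_left (deltaMap_no_trunc φ x)

lemma exists_delta_map_eq_eqToHom_iff {X Y : FinOObj} (φ : X ⟶ Y) :
    (∃ h : delta.obj X = delta.obj Y, delta.map φ = eqToHom h) ↔
      FinStar.toNat (deltaObj X) = FinStar.toNat (deltaObj Y) ∧
        ∀ x : Fin (X.k + 1), (x : ℕ) ≤ FinStar.toNat (deltaObj X) →
          (φ.f.toFun x : ℕ) = x := by
  refine ⟨fun ⟨h, hid⟩ => ⟨h, fun x hx => ?_⟩,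
    fun ⟨(h : delta.obj X = delta.obj Y), hfix⟩ => ⟨h, ?_⟩⟩
  · have hx' := (FinStar.hom_eq_eqToHom_iff h _).mp hid ⟨x, Nat.lt_succ_of_le hx⟩
    rwa [delta_map_val] at hx'
  · refine (FinStar.hom_eq_eqToHom_iff h _).mpr fun x => ?_
    rw [delta_map_val]
    exact hfix _ (Nat.lt_succ_iff.mp x.isLt)

/-- Between objects of the same colour, `δ` only forgets the top point of a white object, which
`φ` must fix anyway since it preserves the distinguished point. -/
lemma exists_eq_eqToHom_of_delta_map_eq_eqToHom {X Y : FinOObj} (φ : X ⟶ Y)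
    (hw : X.white = Y.white) (h : delta.obj X = delta.obj Y)
    (hid : delta.map φ = eqToHom h) : ∃ h : X = Y, φ = eqToHom h := by
  obtain ⟨hobj, hfix⟩ := (exists_delta_map_eq_eqToHom_iff φ).mp ⟨h, hid⟩
  simp only [deltaObj_toNat, hw] at hobj hfix
  have hX := X.one_le_k
  have hY := Y.one_le_k
  cases hYw : Y.white
  · simp only [hYw, Bool.false_eq_true, if_false] at hobj hfix
    exact φ.exists_eq_eqToHom hobj hw fun x => hfix x (by omega)
  · simp only [hYw, if_true] at hobj hfix
    have hXa := X.white_top (hw.trans hYw)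
    have hYa := Y.white_top hYw
    refine φ.exists_eq_eqToHom (by omega) hw fun x => ?_
    rcases Nat.lt_or_ge x X.k with hx | hx
    · exact hfix x (by omega)
    · obtain rfl : x = X.a := Fin.ext (by omega)
      rw [φ.map_a]
      omega

end ConfigCat

open ConfigCat CategoryTheory in
/-- a non-identity morphism `f : ([k],a,c) → ([ℓ],a',c')` of
`Fin_o` is sent to an identity morphism by `δ` iff `c` is white, `c'` is black,
`ℓ = k − 1`, `a = k`, `f(x) = x` for all `x < k`, and `f(k) = a'`. In
particular, no non-identity black-to-black or white-to-white morphism is sent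
to an identity by `δ`. -/
theorem delta_map_eq_id_iff (X Y : FinOObj) (φ : X ⟶ Y)
    (hφ : ¬∃ h : X = Y, φ = eqToHom h) :
    ((∃ h : delta.obj X = delta.obj Y, delta.map φ = eqToHom h) ↔
      (X.white = true ∧ Y.white = false ∧ Y.k = X.k - 1 ∧ (X.a : ℕ) = X.k ∧
        (∀ x : Fin (X.k + 1), (x : ℕ) < X.k → ((φ.f.toFun x : ℕ) = (x : ℕ))) ∧
        (φ.f.toFun X.a = Y.a))) ∧
    (X.white = Y.white → ¬∃ h : delta.obj X = delta.obj Y, delta.map φ = eqToHom h) := by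
  have hsame : X.white = Y.white → ¬∃ h : delta.obj X = delta.obj Y,
      delta.map φ = eqToHom h :=
    fun hw ⟨h, hid⟩ => hφ (exists_eq_eqToHom_of_delta_map_eq_eqToHom φ hw h hid)
  refine ⟨⟨fun hid => ?_, fun hcond => ?_⟩, hsame⟩
  · have hYw : Y.white = false := by
      by_contra hYw
      rw [Bool.not_eq_false] at hYw
      exact hsame ((φ.white_cond hYw).1.trans hYw.symm) hid
    have hXw : X.white = true := by
      by_contra hXw
      rw [Bool.not_eq_true] at hXw
      exact hsame (hXw.trans hYw.symm) hid
    obtain ⟨hobj, hfix⟩ := (exists_delta_map_eq_eqToHom_iff φ).mp hid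
    simp only [deltaObj_toNat, hXw, hYw, if_true, Bool.false_eq_true, if_false] at hobj hfix
    exact ⟨hXw, hYw, hobj.symm, X.white_top hXw, fun x hx => hfix x (by omega), φ.map_a⟩
  · obtain ⟨hXw, hYw, hk, -, hfix, -⟩ := hcond
    have := X.one_le_k
    rw [exists_delta_map_eq_eqToHom_iff]
    simp only [deltaObj_toNat, hXw, hYw, if_true, Bool.false_eq_true, if_false]
    exact ⟨hk.symm, fun x hx => hfix x (by omega)⟩
end

section
/- The functor α : Fin_* → Fin_o defined on objects by α([k]) = ([k+1], k+1, white), which identifies Fin_* with the full subcategory of white objects of Fin_o, is left adjoint to the functor δ : Fin_o → Fin_*; moreover δ ∘ α = id on Fin_*. -/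
open CategoryTheory Simplicial

namespace ConfigCat

/-- Extension of a based map `[k] → [ℓ]` to a based map `[k+1] → [ℓ+1]` sending
`k+1` to `ℓ+1` and agreeing with `f` elsewhere. -/
def alphaFun {k l : ℕ} (f : FinStarHom k l) (x : Fin (k + 1 + 1)) : Fin (l + 1 + 1) :=
  if _ : (x : ℕ) = k + 1 then Fin.last (l + 1)
  else (f.toFun ⟨(x : ℕ), by have h1 : (x : ℕ) < k + 1 + 1 := x.isLt; omega⟩).castSucc

/-- The functor `α : Fin_* → Fin_o`, `[k] ↦ ([k+1], k+1, white)`, extending a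
based map `[k] → [ℓ]` to `[k+1] → [ℓ+1]` by sending `k+1` to `ℓ+1`. -/
def alpha : FinStar ⥤ FinOObj where
  obj k :=
    { k := FinStar.toNat k + 1
      a := Fin.last (FinStar.toNat k + 1)
      white := true
      a_ne_zero := by
        intro h
        exact (Nat.succ_ne_zero _) ((congrArg Fin.val h).trans rfl)
      white_top := fun _ => rfl }
  map {k l} f :=
    { f :=
        { toFun := alphaFun f
          map_zero := by
            unfold alphaFun
            rw [dif_neg (by simp)]
            simp [f.map_zero] }
      map_a := by
        show alphaFun f (Fin.last (FinStar.toNat k + 1)) = Fin.last (FinStar.toNat l + 1)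
        unfold alphaFun
        exact dif_pos rfl
      white_cond := fun _ => by
        refine ⟨rfl, fun x hx => ?_⟩
        by_cases h : (x : ℕ) = FinStar.toNat k + 1
        · exact Fin.ext (h.trans (Fin.val_last _).symm)
        · exfalso
          replace hx : alphaFun f x = Fin.last (FinStar.toNat l + 1) := hx
          unfold alphaFun at hx
          rw [dif_neg h] at hx
          have h2 := congrArg Fin.val hx
          rw [Fin.coe_castSucc, Fin.val_last] at h2
          exact absurd h2 (Nat.ne_of_lt (Fin.is_lt _)) }
  map_id k := by
    apply FinOHom.ext
    apply FinStarHom.ext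
    funext x
    show alphaFun (𝟙 k) x = x
    unfold alphaFun
    split
    · next h =>
        apply Fin.ext
        rw [Fin.val_last, h]
    · next h =>
        apply Fin.ext
        rw [Fin.coe_castSucc]
        rfl
  map_comp {k l m} f g := by
    apply FinOHom.ext
    apply FinStarHom.ext
    funext x
    show alphaFun (f ≫ g) x = alphaFun g (alphaFun f x)
    by_cases h : (x : ℕ) = FinStar.toNat k + 1
    case pos =>
      have hfx : alphaFun f x = Fin.last (FinStar.toNat l + 1) := by
        unfold alphaFun
        split
        · rfl
        · next h2 => exact absurd h h2
      rw [hfx]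
      have h2 : alphaFun g (Fin.last (FinStar.toNat l + 1)) =
          Fin.last (FinStar.toNat m + 1) := by
        unfold alphaFun
        split
        · rfl
        · next h3 => exact absurd (Fin.val_last _) h3
      rw [h2]
      unfold alphaFun
      split
      · rfl
      · next h3 => exact absurd h h3
    case neg =>
      have hlt : (x : ℕ) < FinStar.toNat k + 1 := by
        have h1 : (x : ℕ) < FinStar.toNat k + 1 + 1 := x.isLt
        omega
      have hfx : alphaFun f x = Fin.castSucc (f.toFun ⟨(x : ℕ), hlt⟩) := by
        unfold alphaFun
        split
        · next h2 => exact absurd h2 h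
        · rfl
      rw [hfx]
      have h4 : alphaFun g (Fin.castSucc (f.toFun ⟨(x : ℕ), hlt⟩)) =
          Fin.castSucc (g.toFun (f.toFun ⟨(x : ℕ), hlt⟩)) := by
        unfold alphaFun
        split
        · next h3 =>
            exfalso
            rw [Fin.coe_castSucc] at h3
            exact absurd h3 (Nat.ne_of_lt (Fin.is_lt _))
        · next h3 => congr 1
      rw [h4]
      have h5 : alphaFun (f ≫ g) x = Fin.castSucc ((f ≫ g).toFun ⟨(x : ℕ), hlt⟩) := by
        unfold alphaFun
        split
        · next h2 => exact absurd h2 h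
        · rfl
      rw [h5]
      rfl

end ConfigCat


/-! A morphism `α[k] → Y` is determined by its restriction to `[k]`, and this restriction
lands in `δ Y`: if `Y` is white, its distinguished point is its top point, whose only preimage
is the top point `k + 1`. Conversely, a based map `[k] → δ Y` extends to `α[k] → Y` by sending
`k + 1` to the distinguished point of `Y`. The unit of the resulting adjunction is the
identity, so `α` is fully faithful and `δ ∘ α = 𝟭`. -/

namespace ConfigCat

@[ext]
lemma FinStar.hom_ext {k l : FinStar} {f g : k ⟶ l} (h : ∀ x, f.toFun x = g.toFun x) :
    f = g :=
  FinStarHom.ext (funext h)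

@[ext]
lemma FinOObj.hom_ext {X Y : FinOObj} {φ ψ : X ⟶ Y} (h : ∀ x, φ.f.toFun x = ψ.f.toFun x) :
    φ = ψ :=
  FinOHom.ext (FinStarHom.ext (funext h))

lemma alphaFun_last {k l : ℕ} (f : FinStarHom k l) :
    alphaFun f (Fin.last (k + 1)) = Fin.last (l + 1) :=
  dif_pos rfl

lemma alphaFun_castSucc {k l : ℕ} (f : FinStarHom k l) (x : Fin (k + 1)) :
    alphaFun f x.castSucc = (f.toFun x).castSucc :=
  dif_neg (Fin.val_castSucc x ▸ x.isLt.ne)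

lemma castLE_deltaMap_apply {X Y : FinOObj} (φ : X ⟶ Y)
    (x : Fin (FinStar.toNat (deltaObj X) + 1)) :
    Fin.castLE (Nat.succ_le_succ (deltaObj_le Y)) ((deltaMap φ).toFun x) =
      φ.f.toFun (Fin.castLE (Nat.succ_le_succ (deltaObj_le X)) x) :=
  Fin.ext (min_eq_left (deltaMap_no_trunc φ x))

lemma deltaObj_lt_a_of_white {Y : FinOObj} (hY : Y.white = true) :
    FinStar.toNat (deltaObj Y) < Y.a := by
  have ha : (Y.a : ℕ) ≠ 0 := Fin.val_ne_zero_iff.mpr Y.a_ne_zero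
  have hk := Y.white_top hY
  simp only [deltaObj, FinStar.toNat, FinStar.mk, hY, if_true]
  omega

section fromDeltaFun

variable {n : ℕ} {Y : FinOObj} (g : Fin (n + 1) → Fin (FinStar.toNat (deltaObj Y) + 1))

def fromDeltaFun : Fin (n + 1 + 1) → Fin (Y.k + 1) :=
  Fin.lastCases Y.a fun x => Fin.castLE (Nat.succ_le_succ (deltaObj_le Y)) (g x)

lemma fromDeltaFun_last : fromDeltaFun g (Fin.last (n + 1)) = Y.a :=
  Fin.lastCases_last

lemma fromDeltaFun_castSucc (x : Fin (n + 1)) :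
    fromDeltaFun g x.castSucc = Fin.castLE (Nat.succ_le_succ (deltaObj_le Y)) (g x) :=
  Fin.lastCases_castSucc x

variable {g}

lemma fromDeltaFun_zero (hg : g 0 = 0) : fromDeltaFun g 0 = 0 := by
  rw [← Fin.castSucc_zero, fromDeltaFun_castSucc, hg]
  rfl

lemma eq_last_of_fromDeltaFun_eq_a (hY : Y.white = true) {x : Fin (n + 1 + 1)}
    (hx : fromDeltaFun g x = Y.a) : x = Fin.last (n + 1) := by
  induction x using Fin.lastCases with
  | last => rfl
  | cast i =>
    rw [fromDeltaFun_castSucc, Fin.ext_iff, Fin.val_castLE] at hx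
    have := deltaObj_lt_a_of_white hY
    have := (g i).isLt
    omega

end fromDeltaFun

def fromDelta {k : FinStar} {Y : FinOObj} (g : k ⟶ delta.obj Y) : alpha.obj k ⟶ Y where
  f :=
    { toFun := fromDeltaFun g.toFun
      map_zero := fromDeltaFun_zero g.map_zero }
  map_a := fromDeltaFun_last g.toFun
  white_cond hY := ⟨rfl, fun _ hx => eq_last_of_fromDeltaFun_eq_a hY hx⟩

def alphaDeltaHomEquiv (k : FinStar) (Y : FinOObj) :
    (alpha.obj k ⟶ Y) ≃ (k ⟶ delta.obj Y) where
  toFun := delta.map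
  invFun := fromDelta
  left_inv φ := by
    ext (x : Fin (FinStar.toNat k + 1 + 1)) : 1
    induction x using Fin.lastCases with
    | last => exact (fromDeltaFun_last _).trans φ.map_a.symm
    | cast i => exact (fromDeltaFun_castSucc _ i).trans (castLE_deltaMap_apply φ i)
  right_inv g := by
    ext x : 1
    apply Fin.castLE_injective (Nat.succ_le_succ (deltaObj_le Y))
    exact (castLE_deltaMap_apply (fromDelta g) x).trans (fromDeltaFun_castSucc _ x)

lemma fromDelta_comp {k l : FinStar} {Y : FinOObj} (f : k ⟶ l) (g : l ⟶ delta.obj Y) :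
    fromDelta (f ≫ g) = alpha.map f ≫ fromDelta g := by
  ext (x : Fin (FinStar.toNat k + 1 + 1)) : 1
  induction x using Fin.lastCases with
  | last =>
    change fromDeltaFun _ _ = fromDeltaFun g.toFun (alphaFun f (Fin.last _))
    rw [alphaFun_last]
    exact (fromDeltaFun_last _).trans (fromDeltaFun_last _).symm
  | cast i =>
    change fromDeltaFun _ _ = fromDeltaFun g.toFun (alphaFun f i.castSucc)
    rw [alphaFun_castSucc]
    exact (fromDeltaFun_castSucc _ i).trans (fromDeltaFun_castSucc g.toFun (f.toFun i)).symm

def alphaDeltaAdjunction : alpha ⊣ delta :=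
  Adjunction.mkOfHomEquiv
    { homEquiv := alphaDeltaHomEquiv
      homEquiv_naturality_left_symm := fromDelta_comp
      homEquiv_naturality_right := delta.map_comp }

lemma alphaDeltaAdjunction_unit_app (k : FinStar) : alphaDeltaAdjunction.unit.app k = 𝟙 k :=
  delta.map_id (alpha.obj k)

instance (k : FinStar) : IsIso (alphaDeltaAdjunction.unit.app k) := by
  rw [alphaDeltaAdjunction_unit_app]
  exact IsIso.id k

instance : IsIso alphaDeltaAdjunction.unit :=
  NatIso.isIso_of_isIso_app _

lemma alpha_comp_delta : alpha ⋙ delta = 𝟭 FinStar :=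
  (Functor.ext_of_iso (asIso alphaDeltaAdjunction.unit) (fun _ => rfl)
    alphaDeltaAdjunction_unit_app).symm

end ConfigCat

open ConfigCat CategoryTheory in
/-- the functor `α : Fin_* → Fin_o`, `[k] ↦ ([k+1], k+1, white)`,
which identifies `Fin_*` with the full subcategory of white objects of `Fin_o`,
is left adjoint to the deletion functor `δ : Fin_o → Fin_*`, and `δ ∘ α` is the
identity functor of `Fin_*`. -/
theorem alpha_left_adjoint_to_delta :
    Nonempty (alpha ⊣ delta) ∧ alpha ⋙ delta = 𝟭 FinStar ∧
    alpha.Full ∧ alpha.Faithful ∧ ∀ k : FinStar, (alpha.obj k).white = true :=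
  ⟨⟨alphaDeltaAdjunction⟩, alpha_comp_delta,
    alphaDeltaAdjunction.fullyFaithfulLOfIsIsoUnit.full,
    alphaDeltaAdjunction.fullyFaithfulLOfIsIsoUnit.faithful, fun _ => rfl⟩
end

section
/- Let C be a finite poset with full sub-posets A and B such that A ∪ B = C, B is upward closed in C, A is downward closed in C, for all a ∈ A and b ∈ B with a ≤ b there exists c ∈ A ∩ B with a ≤ c ≤ b, and A ∩ B is linearly ordered. For a nondegenerate n-simplex σ = (x₀ > x₁ > ⋯ > x_n) of the nerve NC that lies neither in NA nor in NB, define w(σ) to be the largest index such that x₀, …, x_{w(σ)} ∈ B (so 0 < w(σ) < n, x₀ ∈ B∖A, x_n ∈ A∖B, and x_{w(σ)+1},…,x_n ∈ A∖B). Say σ is of type 1 if x_{w(σ)} ∈ A ∩ B and x_{w(σ)} is the minimal element of {c ∈ A ∩ B : x_{w(σ)−1} ≥ c ≥ x_{w(σ)+1}}; otherwise σ is of type 2. Then the assignment σ ↦ d_{w(σ)}σ (deleting the vertex x_{w(σ)}) is a bijection from the set of type-1 simplices onto the set of type-2 simplices (both ranging over nondegenerate simplices of NC not in NA ∪ NB).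 -/
namespace Stmt17

variable {C : Type} [PartialOrder C]

/-- A nondegenerate simplex of the nerve of a poset: a strictly decreasing
chain `x₀ > x₁ > ⋯ > x_n`. -/
abbrev Simp (C : Type) [PartialOrder C] : Type :=
  Σ n : ℕ, {x : Fin (n + 1) → C // StrictAnti x}

/-- Evaluation of a simplex at an index (indices ≥ n are reduced mod n+1; all
uses below are in range). -/
def evalS (σ : Simp C) (i : ℕ) : C :=
  σ.2.1 ⟨i % (σ.1 + 1), Nat.mod_lt _ (Nat.succ_pos _)⟩

/-- The simplex lies neither in the nerve of `A` nor in the nerve of `B`. -/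
def Good (A B : Set C) (σ : Simp C) : Prop :=
  (¬∀ i, σ.2.1 i ∈ A) ∧ (¬∀ i, σ.2.1 i ∈ B)

/-- `w` is the cut index of `σ`: the vertices `x₀,…,x_w` lie in `B` and the
later ones do not. -/
def IsW (B : Set C) (σ : Simp C) (w : ℕ) : Prop :=
  ∀ j : Fin (σ.1 + 1), σ.2.1 j ∈ B ↔ (j : ℕ) ≤ w

/-- `σ` is of type 1: at its cut index `w`, the vertex `x_w` lies in `A ∩ B` and
is the least element of `{c ∈ A ∩ B : x_{w−1} ≥ c ≥ x_{w+1}}`. -/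
def Type1 (A B : Set C) (σ : Simp C) : Prop :=
  ∃ w : ℕ, 0 < w ∧ w < σ.1 ∧ IsW B σ w ∧
    evalS σ w ∈ A ∧ evalS σ w ∈ B ∧
    IsLeast {c : C | c ∈ A ∧ c ∈ B ∧ c ≤ evalS σ (w - 1) ∧ evalS σ (w + 1) ≤ c} (evalS σ w)

/-!
Deleting the cut vertex `x_w` of a type-1 simplex `σ` is injective because `x_w` is recovered from
`d_w σ` as the least element of `A ∩ B` between its two neighbours `x_{w-1}` and `x_{w+1}`, which
are consecutive vertices of `d_w σ`. The image is of type 2: its cut vertex is `x_{w-1}`, which is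
not least among the elements of `A ∩ B` between `x_{w-2}` and `x_{w+1}`, since `x_w` is one of them.

Conversely, let `τ` be of type 2 with cut index `v`. Since `τ_{v+1} ∈ A` and `τ_v ∈ B`, the
interpolation hypothesis makes the set of elements of `A ∩ B` in `[τ_{v+1}, τ_v]` nonempty; it is a
finite chain, so it has a least element `c`. Then `c ≠ τ_{v+1}` because `τ_{v+1} ∉ B`, and
`c ≠ τ_v` because otherwise `τ` would be of type 1 (linearity of `A ∩ B` upgrades minimality among
the elements below `τ_v` to minimality among those below `τ_{v-1}`). Inserting `c` after `τ_v` gives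
a type-1 simplex whose cut vertex is `c` and whose deletion is `τ`.
-/

theorem IsChain.exists_isLeast {α : Type*} [Preorder α] {s : Set α}
    (hs : IsChain (· ≤ ·) s) (hfin : s.Finite) (hne : s.Nonempty) : ∃ a, IsLeast s a := by
  obtain ⟨a, ha⟩ := hfin.exists_minimal hne
  exact ⟨a, ha.prop, fun b hb => (hs.total ha.prop hb).elim id (ha.le_of_le hb)⟩

section Simplex

lemma evalS_of_le (σ : Simp C) {i : ℕ} (hi : i ≤ σ.1) :
    evalS σ i = σ.2.1 ⟨i, Nat.lt_succ_of_le hi⟩ := by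
  simp only [evalS, Nat.mod_eq_of_lt (Nat.lt_succ_of_le hi)]

lemma evalS_val (σ : Simp C) (j : Fin (σ.1 + 1)) : evalS σ j = σ.2.1 j :=
  evalS_of_le σ (Nat.lt_succ_iff.mp j.isLt)

lemma evalS_lt_evalS (σ : Simp C) {i j : ℕ} (hj : j ≤ σ.1) (hij : i < j) :
    evalS σ j < evalS σ i := by
  rw [evalS_of_le σ hj, evalS_of_le σ (hij.le.trans hj)]
  exact σ.2.2 (Fin.mk_lt_mk.mpr hij)

lemma evalS_le_evalS (σ : Simp C) {i j : ℕ} (hj : j ≤ σ.1) (hij : i ≤ j) :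
    evalS σ j ≤ evalS σ i := by
  rcases hij.eq_or_lt with rfl | hlt
  · rfl
  · exact (evalS_lt_evalS σ hj hlt).le

lemma Simp.ext_evalS {σ τ : Simp C} (hlen : σ.1 = τ.1)
    (h : ∀ i ≤ σ.1, evalS σ i = evalS τ i) : σ = τ := by
  obtain ⟨n, x, hx⟩ := σ
  obtain ⟨m, y, hy⟩ := τ
  obtain rfl : n = m := hlen
  congr
  funext i
  simpa only [evalS_val] using h i (Nat.lt_succ_iff.mp i.isLt)

/-- The face `d_w σ`. -/
def delAt (σ : Simp C) (w : ℕ) : Simp C :=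
  ⟨σ.1 - 1, fun i => evalS σ (if (i : ℕ) < w then i else i + 1), fun i j hij => by
    have : (i : ℕ) < j := hij
    have := j.isLt
    dsimp only
    split_ifs <;> exact evalS_lt_evalS σ (by omega) (by omega)⟩

lemma delAt_fst (σ : Simp C) (w : ℕ) : (delAt σ w).1 = σ.1 - 1 := rfl

lemma delAt_evalS (σ : Simp C) (w : ℕ) {i : ℕ} (hi : i ≤ σ.1 - 1) :
    evalS (delAt σ w) i = evalS σ (if i < w then i else i + 1) :=
  evalS_of_le (delAt σ w) hi

lemma delAt_evalS_of_lt (σ : Simp C) {w i : ℕ} (hiw : i < w) (hi : i ≤ σ.1 - 1) :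
    evalS (delAt σ w) i = evalS σ i := by
  rw [delAt_evalS σ w hi, if_pos hiw]

lemma delAt_evalS_of_le (σ : Simp C) {w i : ℕ} (hwi : w ≤ i) (hi : i ≤ σ.1 - 1) :
    evalS (delAt σ w) i = evalS σ (i + 1) := by
  rw [delAt_evalS σ w hi, if_neg hwi.not_gt]

lemma eq_of_delAt_eq {σ τ : Simp C} {w : ℕ} (hlen : σ.1 = τ.1) (hw : w ≤ σ.1)
    (hdel : delAt σ w = delAt τ w) (hmid : evalS σ w = evalS τ w) : σ = τ := by
  refine Simp.ext_evalS hlen fun i hi => ?_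
  rcases lt_trichotomy i w with hlt | rfl | hgt
  · rw [← delAt_evalS_of_lt σ hlt (by omega), ← delAt_evalS_of_lt τ hlt (by omega), hdel]
  · exact hmid
  · obtain ⟨k, rfl⟩ : ∃ k, i = k + 1 := ⟨i - 1, by omega⟩
    rw [← delAt_evalS_of_le σ (w := w) (by omega) (by omega),
      ← delAt_evalS_of_le τ (w := w) (by omega) (by omega), hdel]

/-- `c` becomes vertex `v + 1`, between `τ_v` and `τ_{v+1}`. -/
def insAfter (τ : Simp C) (v : ℕ) (c : C) (hv : v < τ.1) (hlt : c < evalS τ v)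
    (hgt : evalS τ (v + 1) < c) : Simp C :=
  ⟨τ.1 + 1, fun i => if (i : ℕ) ≤ v then evalS τ i else if (i : ℕ) = v + 1 then c
      else evalS τ (i - 1), fun i j hij => by
    have : (i : ℕ) < j := hij
    have := j.isLt
    dsimp only
    split_ifs <;> first
      | omega
      | exact evalS_lt_evalS τ (by omega) (by omega)
      | exact hlt.trans_le (evalS_le_evalS τ (by omega) (by omega))
      | exact (evalS_le_evalS τ (by omega) (by omega)).trans_lt hgt⟩

lemma insAfter_evalS (τ : Simp C) (v : ℕ) (c : C) (hv hlt hgt) {i : ℕ} (hi : i ≤ τ.1 + 1) :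
    evalS (insAfter τ v c hv hlt hgt) i =
      if i ≤ v then evalS τ i else if i = v + 1 then c else evalS τ (i - 1) :=
  evalS_of_le _ hi

lemma delAt_insAfter (τ : Simp C) (v : ℕ) (c : C) (hv hlt hgt) :
    delAt (insAfter τ v c hv hlt hgt) (v + 1) = τ := by
  refine Simp.ext_evalS (Nat.add_sub_cancel _ _) fun i hi => ?_
  change i ≤ τ.1 + 1 - 1 at hi
  rcases le_or_gt i v with h | h
  · rw [delAt_evalS_of_lt _ (by omega) hi, insAfter_evalS _ _ _ _ _ _ (by omega), if_pos h]
  · rw [delAt_evalS_of_le _ h hi, insAfter_evalS _ _ _ _ _ _ (by omega), if_neg (by omega),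
      if_neg (by omega), Nat.add_sub_cancel]

end Simplex

section Cut

variable {A B : Set C} {σ : Simp C} {w : ℕ}

lemma isW_iff : IsW B σ w ↔ ∀ i ≤ σ.1, (evalS σ i ∈ B ↔ i ≤ w) := by
  refine ⟨fun h i hi => ?_, fun h j => ?_⟩
  · rw [evalS_of_le σ hi]
    exact h _
  · rw [← evalS_val]
    exact h j (Nat.lt_succ_iff.mp j.isLt)

lemma IsW.mem_iff (hw : IsW B σ w) {i : ℕ} (hi : i ≤ σ.1) : evalS σ i ∈ B ↔ i ≤ w :=
  isW_iff.mp hw i hi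

lemma IsW.lt_of_last_notMem (hw : IsW B σ w) (hn : evalS σ σ.1 ∉ B) : w < σ.1 :=
  not_le.mp fun h => hn ((hw.mem_iff le_rfl).mpr h)

lemma IsW.unique {w' : ℕ} (hw : IsW B σ w) (hw' : IsW B σ w') (hn : evalS σ σ.1 ∉ B) :
    w = w' := by
  have h := hw.lt_of_last_notMem hn
  have h' := hw'.lt_of_last_notMem hn
  exact le_antisymm ((hw'.mem_iff h.le).mp ((hw.mem_iff h.le).mpr le_rfl))
    ((hw.mem_iff h'.le).mp ((hw'.mem_iff h'.le).mpr le_rfl))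

open Classical in
noncomputable def cutIndex (B : Set C) (σ : Simp C) : ℕ :=
  Nat.findGreatest (fun k => evalS σ k ∈ B) σ.1

lemma isW_cutIndex (hBup : ∀ b c : C, b ∈ B → b ≤ c → c ∈ B) (h0 : evalS σ 0 ∈ B) :
    IsW B σ (cutIndex B σ) := by
  classical
  refine isW_iff.mpr fun i hi => ⟨fun hiB => Nat.le_findGreatest hi hiB, fun hle => ?_⟩
  exact hBup _ _ (Nat.findGreatest_spec (P := fun k => evalS σ k ∈ B) (Nat.zero_le _) h0)
    (evalS_le_evalS σ (Nat.findGreatest_le _) hle)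

lemma Good.zero_notMem (hAdown : ∀ a c : C, a ∈ A → c ≤ a → c ∈ A) (hG : Good A B σ) :
    evalS σ 0 ∉ A := fun h0 => hG.1 fun i => by
  rw [← evalS_val]
  exact hAdown _ _ h0 (evalS_le_evalS σ (Nat.lt_succ_iff.mp i.isLt) (Nat.zero_le _))

lemma Good.last_notMem (hBup : ∀ b c : C, b ∈ B → b ≤ c → c ∈ B) (hG : Good A B σ) :
    evalS σ σ.1 ∉ B := fun hn => hG.2 fun i => by
  rw [← evalS_val]
  exact hBup _ _ hn (evalS_le_evalS σ le_rfl (Nat.lt_succ_iff.mp i.isLt))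

lemma Good.of_notMem (h0 : evalS σ 0 ∉ A) (hn : evalS σ σ.1 ∉ B) : Good A B σ :=
  ⟨fun h => h0 (evalS_of_le σ (Nat.zero_le _) ▸ h _), fun h => hn (evalS_of_le σ le_rfl ▸ h _)⟩

lemma Good.isW_cutIndex (hunion : A ∪ B = Set.univ) (hBup : ∀ b c : C, b ∈ B → b ≤ c → c ∈ B)
    (hAdown : ∀ a c : C, a ∈ A → c ≤ a → c ∈ A) (hG : Good A B σ) : IsW B σ (cutIndex B σ) :=
  Stmt17.isW_cutIndex hBup
    ((Set.eq_univ_iff_forall.mp hunion _).resolve_left (hG.zero_notMem hAdown))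

end Cut

section TypeOne

variable {A B : Set C} {σ τ : Simp C} {v w : ℕ}

/-- Written as in `Type1` rather than as `A ∩ B ∩ Set.Icc lo hi`, so that `Type1` unfolds to it. -/
def interIcc (A B : Set C) (lo hi : C) : Set C := {c | c ∈ A ∧ c ∈ B ∧ c ≤ hi ∧ lo ≤ c}

lemma type1_iff_of_isW (hw : IsW B σ w) (hn : evalS σ σ.1 ∉ B) :
    Type1 A B σ ↔
      0 < w ∧ IsLeast (interIcc A B (evalS σ (w + 1)) (evalS σ (w - 1))) (evalS σ w) := by
  constructor
  · rintro ⟨w', hw'0, hw'n, hw', -, -, hleast⟩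
    obtain rfl := hw'.unique hw hn
    exact ⟨hw'0, hleast⟩
  · rintro ⟨hw0, hleast⟩
    exact ⟨w, hw0, hw.lt_of_last_notMem hn, hw, hleast.1.1, hleast.1.2.1, hleast⟩

lemma interIcc_eq_delAt (hw0 : 0 < w) (hwn : w < σ.1) :
    interIcc A B (evalS σ (w + 1)) (evalS σ (w - 1)) =
      interIcc A B (evalS (delAt σ w) w) (evalS (delAt σ w) (w - 1)) := by
  rw [delAt_evalS_of_le σ le_rfl (by omega), delAt_evalS_of_lt σ (by omega) (by omega)]

lemma delAt_evalS_last (hwn : w < σ.1) : evalS (delAt σ w) (delAt σ w).1 = evalS σ σ.1 := by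
  rw [delAt_fst, delAt_evalS_of_le σ (by omega) le_rfl, Nat.sub_add_cancel (by omega)]

lemma isW_delAt (hw : IsW B σ w) (hw0 : 0 < w) : IsW B (delAt σ w) (w - 1) := by
  refine isW_iff.mpr fun i hi => ?_
  rw [delAt_fst] at hi
  rcases lt_or_ge i w with h | h
  · rw [delAt_evalS_of_lt σ h hi, hw.mem_iff (by omega)]
    omega
  · rw [delAt_evalS_of_le σ h hi, hw.mem_iff (by omega)]
    omega

lemma good_delAt (h0 : evalS σ 0 ∉ A) (hn : evalS σ σ.1 ∉ B) (hw : IsW B σ w)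
    (hT : Type1 A B σ) : Good A B (delAt σ w) := by
  obtain ⟨hw0, -⟩ := (type1_iff_of_isW hw hn).mp hT
  have hwn := hw.lt_of_last_notMem hn
  exact Good.of_notMem (by rwa [delAt_evalS_of_lt σ hw0 (Nat.zero_le _)])
    (by rwa [delAt_evalS_last hwn])

lemma not_type1_delAt (hn : evalS σ σ.1 ∉ B) (hw : IsW B σ w) (hT : Type1 A B σ) :
    ¬Type1 A B (delAt σ w) := by
  obtain ⟨hw0, ⟨hA, hB, -⟩, -⟩ := (type1_iff_of_isW hw hn).mp hT
  have hwn := hw.lt_of_last_notMem hn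
  rw [type1_iff_of_isW (isW_delAt hw hw0) (by rwa [delAt_evalS_last hwn])]
  rintro ⟨hw1, -, hleast⟩
  have hmem : evalS σ w ∈ interIcc A B (evalS (delAt σ w) (w - 1 + 1))
      (evalS (delAt σ w) (w - 1 - 1)) := by
    rw [Nat.sub_add_cancel hw0, delAt_evalS_of_le σ le_rfl (by omega),
      delAt_evalS_of_lt σ (by omega) (by omega)]
    exact ⟨hA, hB, evalS_le_evalS σ hwn.le (by omega), evalS_le_evalS σ (by omega) (by omega)⟩
  have hle := hleast hmem
  rw [delAt_evalS_of_lt σ (by omega) (by omega)] at hle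
  exact (evalS_lt_evalS σ hwn.le (by omega : w - 1 < w)).not_ge hle

lemma eq_of_delAt_eq_of_type1 (hσn : evalS σ σ.1 ∉ B) (hτn : evalS τ τ.1 ∉ B)
    (hσw : IsW B σ v) (hτw : IsW B τ w) (hσ : Type1 A B σ) (hτ : Type1 A B τ)
    (hdel : delAt σ v = delAt τ w) : σ = τ := by
  obtain ⟨hv0, hσ⟩ := (type1_iff_of_isW hσw hσn).mp hσ
  obtain ⟨hw0, hτ⟩ := (type1_iff_of_isW hτw hτn).mp hτ
  have hvn := hσw.lt_of_last_notMem hσn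
  have hwn := hτw.lt_of_last_notMem hτn
  have hlen : σ.1 - 1 = τ.1 - 1 := congrArg Sigma.fst hdel
  obtain rfl : v = w := by
    have := (isW_delAt hσw hv0).unique (hdel ▸ isW_delAt hτw hw0)
      (by rwa [delAt_evalS_last hvn])
    omega
  rw [interIcc_eq_delAt hv0 hvn, hdel] at hσ
  rw [interIcc_eq_delAt hw0 hwn] at hτ
  exact eq_of_delAt_eq (by omega) hvn.le hdel (hσ.unique hτ)

end TypeOne

section TypeTwo

variable {A B : Set C} {τ : Simp C} {v : ℕ} {c : C}

lemma exists_isLeast_interIcc [Finite C] (hunion : A ∪ B = Set.univ)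
    (hinterp : ∀ a ∈ A, ∀ b ∈ B, a ≤ b → ∃ c ∈ A ∩ B, a ≤ c ∧ c ≤ b)
    (hlin : IsChain (· ≤ ·) (A ∩ B)) (hv : IsW B τ v) (hvn : v < τ.1) :
    ∃ c, IsLeast (interIcc A B (evalS τ (v + 1)) (evalS τ v)) c := by
  have hnB : evalS τ (v + 1) ∉ B := by
    rw [hv.mem_iff hvn]
    omega
  have hA : evalS τ (v + 1) ∈ A := (Set.eq_univ_iff_forall.mp hunion _).resolve_right hnB
  have hB : evalS τ v ∈ B := (hv.mem_iff hvn.le).mpr le_rfl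
  obtain ⟨c, ⟨hcA, hcB⟩, hlo, hhi⟩ := hinterp _ hA _ hB (evalS_le_evalS τ hvn (by omega))
  refine IsChain.exists_isLeast (hlin.mono fun d hd => ?_) (Set.toFinite _) ⟨c, hcA, hcB, hhi, hlo⟩
  exact ⟨hd.1, hd.2.1⟩

lemma isLeast_interIcc_mem_Ioo (hlin : IsChain (· ≤ ·) (A ∩ B)) (h0 : evalS τ 0 ∉ A)
    (hn : evalS τ τ.1 ∉ B) (hv : IsW B τ v) (hT : ¬Type1 A B τ)
    (hc : IsLeast (interIcc A B (evalS τ (v + 1)) (evalS τ v)) c) :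
    c ∈ Set.Ioo (evalS τ (v + 1)) (evalS τ v) := by
  have hvn := hv.lt_of_last_notMem hn
  obtain ⟨⟨hcA, hcB, hhi, hlo⟩, hleast⟩ := hc
  refine ⟨hlo.lt_of_ne ?_, hhi.lt_of_ne ?_⟩
  · rintro rfl
    exact (hv.mem_iff hvn).not.mpr (by omega) hcB
  · rintro rfl
    rcases Nat.eq_zero_or_pos v with rfl | hv0
    · exact h0 hcA
    refine hT ((type1_iff_of_isW hv hn).mpr ⟨hv0, ⟨hcA, hcB, evalS_le_evalS τ hvn.le (by omega),
      hlo⟩, fun d ⟨hdA, hdB, _, hdlo⟩ => ?_⟩)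
    exact (hlin.total ⟨hdA, hdB⟩ ⟨hcA, hcB⟩).elim (fun h => hleast ⟨hdA, hdB, h, hdlo⟩) id

lemma isW_insAfter (hv : IsW B τ v) (hvn : v < τ.1) (hlt : c < evalS τ v)
    (hgt : evalS τ (v + 1) < c) (hcB : c ∈ B) : IsW B (insAfter τ v c hvn hlt hgt) (v + 1) := by
  refine isW_iff.mpr fun i hi => ?_
  change i ≤ τ.1 + 1 at hi
  rw [insAfter_evalS τ v c hvn hlt hgt hi]
  split_ifs
  · rw [hv.mem_iff (by omega)]
    omega
  · exact iff_of_true hcB (by omega)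
  · rw [hv.mem_iff (by omega)]
    omega

lemma insAfter_evalS_last (hvn : v < τ.1) (hlt : c < evalS τ v) (hgt : evalS τ (v + 1) < c) :
    evalS (insAfter τ v c hvn hlt hgt) (insAfter τ v c hvn hlt hgt).1 = evalS τ τ.1 := by
  change evalS _ (τ.1 + 1) = _
  rw [insAfter_evalS τ v c hvn hlt hgt le_rfl, if_neg (by omega), if_neg (by omega),
    Nat.add_sub_cancel]

lemma exists_type1_delAt_eq [Finite C] (hunion : A ∪ B = Set.univ)
    (hinterp : ∀ a ∈ A, ∀ b ∈ B, a ≤ b → ∃ c ∈ A ∩ B, a ≤ c ∧ c ≤ b)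
    (hlin : IsChain (· ≤ ·) (A ∩ B)) (h0 : evalS τ 0 ∉ A) (hn : evalS τ τ.1 ∉ B)
    (hv : IsW B τ v) (hT : ¬Type1 A B τ) :
    ∃ σ, Good A B σ ∧ Type1 A B σ ∧ IsW B σ (v + 1) ∧ delAt σ (v + 1) = τ := by
  have hvn := hv.lt_of_last_notMem hn
  obtain ⟨c, hc⟩ := exists_isLeast_interIcc hunion hinterp hlin hv hvn
  obtain ⟨hgt, hlt⟩ := isLeast_interIcc_mem_Ioo hlin h0 hn hv hT hc
  set σ := insAfter τ v c hvn hlt hgt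
  have hσw : IsW B σ (v + 1) := isW_insAfter hv hvn hlt hgt hc.1.2.1
  have hσn : evalS σ σ.1 ∉ B := by rwa [insAfter_evalS_last]
  have hdel : delAt σ (v + 1) = τ := delAt_insAfter τ v c hvn hlt hgt
  refine ⟨σ, Good.of_notMem ?_ hσn, (type1_iff_of_isW hσw hσn).mpr ⟨by omega, ?_⟩, hσw, hdel⟩
  · rwa [insAfter_evalS τ v c hvn hlt hgt (Nat.zero_le _), if_pos (Nat.zero_le _)]
  · rw [interIcc_eq_delAt (σ := σ) (by omega) (show v + 1 < τ.1 + 1 by omega), hdel,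
      Nat.add_sub_cancel, insAfter_evalS τ v c hvn hlt hgt (by omega), if_neg (by omega),
      if_pos rfl]
    exact hc

end TypeTwo

/-- under the stated hypotheses on the decomposition `C = A ∪ B`,
deleting the cut vertex `x_{w(σ)}` gives a bijection from the type-1 simplices
onto the type-2 simplices (nondegenerate simplices of the nerve of `C` lying
neither in the nerve of `A` nor in that of `B` which are not of type 1). -/
theorem type1_equiv_type2
    [Finite C] (A B : Set C)
    (hunion : A ∪ B = Set.univ)
    (hBup : ∀ b c : C, b ∈ B → b ≤ c → c ∈ B)
    (hAdown : ∀ a c : C, a ∈ A → c ≤ a → c ∈ A)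
    (hinterp : ∀ a ∈ A, ∀ b ∈ B, a ≤ b → ∃ c ∈ A ∩ B, a ≤ c ∧ c ≤ b)
    (hlin : IsChain (· ≤ ·) (A ∩ B)) :
    ∃ F : {σ : Simp C // Good A B σ ∧ Type1 A B σ} ≃
        {σ : Simp C // Good A B σ ∧ ¬Type1 A B σ},
      ∀ (σ : {σ : Simp C // Good A B σ ∧ Type1 A B σ}) (w : ℕ),
        0 < w → w < σ.1.1 → IsW B σ.1 w →
        (F σ).1.1 = σ.1.1 - 1 ∧
        ∀ i : ℕ, i < σ.1.1 →
          evalS (F σ).1 i = evalS σ.1 (if i < w then i else i + 1) := by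
  have hcut {σ : Simp C} (hG : Good A B σ) := hG.isW_cutIndex hunion hBup hAdown
  let f (σ : {σ : Simp C // Good A B σ ∧ Type1 A B σ}) :
      {σ : Simp C // Good A B σ ∧ ¬Type1 A B σ} :=
    ⟨delAt σ.1 (cutIndex B σ.1),
      good_delAt (σ.2.1.zero_notMem hAdown) (σ.2.1.last_notMem hBup) (hcut σ.2.1) σ.2.2,
      not_type1_delAt (σ.2.1.last_notMem hBup) (hcut σ.2.1) σ.2.2⟩
  have hf : Function.Bijective f := by
    refine ⟨fun σ τ h => Subtype.ext ?_, fun τ => ?_⟩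
    · exact eq_of_delAt_eq_of_type1 (σ.2.1.last_notMem hBup) (τ.2.1.last_notMem hBup)
        (hcut σ.2.1) (hcut τ.2.1) σ.2.2 τ.2.2 (congrArg Subtype.val h)
    · obtain ⟨σ, hG, hT, hw, hdel⟩ := exists_type1_delAt_eq hunion hinterp hlin
        (τ.2.1.zero_notMem hAdown) (τ.2.1.last_notMem hBup) (hcut τ.2.1) τ.2.2
      refine ⟨⟨σ, hG, hT⟩, Subtype.ext ?_⟩
      change delAt σ (cutIndex B σ) = τ.1
      rwa [(hcut hG).unique hw (hG.last_notMem hBup)]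
  refine ⟨Equiv.ofBijective f hf, fun σ w _ _ hw => ?_⟩
  obtain rfl : cutIndex B σ.1 = w := (hcut σ.2.1).unique hw (σ.2.1.last_notMem hBup)
  exact ⟨rfl, fun i hi => delAt_evalS σ.1 _ (by omega)⟩

end Stmt17
end
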